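/- arXiv:2503.00798 — 4 statements merged into one kernel-verified Lean document; each statement's English description precedes it below -/
import Mathlib

section
/- Let G be a connected graph, r a vertex of G, and S a cluster with respect to r (a maximal set of vertices all at distance k from r, for some k ≥ 1, that lie in the same connected component of G minus the ball of radius k−1 around r). If the parent set of S (the set of vertices at distance k−1 from r adjacent to some vertex of S) is not equal to {r}, then the parent set of S is a minimal (r,u)-cutset of G for every vertex u in S. -/
open SimpleGraph

namespace Paper

variable {V : Type}

/-- `u` and `v` are connected in `G` after deleting the vertex set `B`. -/
def ConnOutside (G : SimpleGraph V) (B : Set V) (u v : V) : Prop :=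
  ∃ (hu : u ∈ Bᶜ) (hv : v ∈ Bᶜ), (G.induce Bᶜ).Reachable ⟨u, hu⟩ ⟨v, hv⟩

/-- `C` is an `(a,b)`-cutset of `G`. -/
def IsSep (G : SimpleGraph V) (a b : V) (C : Set V) : Prop :=
  a ∉ C ∧ b ∉ C ∧ ¬ ConnOutside G C a b

/-- `C` is a minimal `(a,b)`-cutset of `G`. -/
def IsMinSep (G : SimpleGraph V) (a b : V) (C : Set V) : Prop :=
  IsSep G a b C ∧ ∀ C' ⊂ C, ¬ IsSep G a b C'

/-- `S` is a cluster of the layering partition of `G` rooted at `r`, at level `k`: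
a maximal set of vertices at distance exactly `k` from `r`, any two of which are
connected in `G` minus the ball of radius `k-1` around `r`. -/
def IsCluster (G : SimpleGraph V) (r : V) (k : ℕ) (S : Set V) : Prop :=
  S.Nonempty ∧ (∀ v ∈ S, G.dist r v = k) ∧
  (∀ u ∈ S, ∀ v ∈ S, ConnOutside G {w | G.dist r w < k} u v) ∧
  ∀ S', S ⊆ S' → (∀ v ∈ S', G.dist r v = k) →
    (∀ u ∈ S', ∀ v ∈ S', ConnOutside G {w | G.dist r w < k} u v) → S' ⊆ S

/-- The parent set of a cluster `S` at level `k`: vertices at distance `k-1` from `r`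
adjacent to some vertex of `S`. -/
def parentSet (G : SimpleGraph V) (r : V) (k : ℕ) (S : Set V) : Set V :=
  {v | G.dist r v = k - 1 ∧ ∃ u ∈ S, G.Adj v u}

/-- `G` has no `K_{2,3}` induced minor. -/
def K23Free (G : SimpleGraph V) : Prop :=
  ¬ ∃ φ : Fin 2 ⊕ Fin 3 → Set V,
      (∀ w, (φ w).Nonempty) ∧ (∀ w, (G.induce (φ w)).Connected) ∧
      (Pairwise fun a b => Disjoint (φ a) (φ b)) ∧
      (∀ a b, a ≠ b →
        ((completeBipartiteGraph (Fin 2) (Fin 3)).Adj a b ↔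
          ∃ u ∈ φ a, ∃ v ∈ φ b, G.Adj u v))

/-- `G` contains a theta as an induced subgraph. -/
def HasTheta (G : SimpleGraph V) : Prop :=
  ∃ (a b : V) (p₁ p₂ p₃ : G.Walk a b),
    p₁.IsPath ∧ p₂.IsPath ∧ p₃.IsPath ∧
    2 ≤ p₁.length ∧ 2 ≤ p₂.length ∧ 2 ≤ p₃.length ∧
    (∀ v, v ∈ p₁.support → v ∈ p₂.support → v = a ∨ v = b) ∧
    (∀ v, v ∈ p₁.support → v ∈ p₃.support → v = a ∨ v = b) ∧
    (∀ v, v ∈ p₂.support → v ∈ p₃.support → v = a ∨ v = b) ∧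
    ∀ u v, u ∈ p₁.support ++ p₂.support ++ p₃.support →
      v ∈ p₁.support ++ p₂.support ++ p₃.support →
      (G.Adj u v ↔ s(u, v) ∈ p₁.edges ++ p₂.edges ++ p₃.edges)

/-- `G` contains a pyramid as an induced subgraph. -/
def HasPyramid (G : SimpleGraph V) : Prop :=
  ∃ (a b₁ b₂ b₃ : V) (p₁ : G.Walk a b₁) (p₂ : G.Walk a b₂) (p₃ : G.Walk a b₃),
    p₁.IsPath ∧ p₂.IsPath ∧ p₃.IsPath ∧
    G.Adj b₁ b₂ ∧ G.Adj b₂ b₃ ∧ G.Adj b₁ b₃ ∧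
    1 ≤ p₁.length ∧ 1 ≤ p₂.length ∧ 1 ≤ p₃.length ∧
    ((2 ≤ p₁.length ∧ 2 ≤ p₂.length) ∨ (2 ≤ p₁.length ∧ 2 ≤ p₃.length) ∨
      (2 ≤ p₂.length ∧ 2 ≤ p₃.length)) ∧
    (∀ v, v ∈ p₁.support → v ∈ p₂.support → v = a) ∧
    (∀ v, v ∈ p₁.support → v ∈ p₃.support → v = a) ∧
    (∀ v, v ∈ p₂.support → v ∈ p₃.support → v = a) ∧
    ∀ u v, u ∈ p₁.support ++ p₂.support ++ p₃.support →
      v ∈ p₁.support ++ p₂.support ++ p₃.support →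
      (G.Adj u v ↔ s(u, v) ∈ p₁.edges ++ p₂.edges ++ p₃.edges ∨
        s(u, v) ∈ [s(b₁, b₂), s(b₂, b₃), s(b₁, b₃)])

/-- The common part of the definition of an (induced) prism in `G`. -/
def PrismWitness (G : SimpleGraph V) (a₁ a₂ a₃ b₁ b₂ b₃ : V)
    (p₁ : G.Walk a₁ b₁) (p₂ : G.Walk a₂ b₂) (p₃ : G.Walk a₃ b₃) : Prop :=
  p₁.IsPath ∧ p₂.IsPath ∧ p₃.IsPath ∧
  G.Adj a₁ a₂ ∧ G.Adj a₂ a₃ ∧ G.Adj a₁ a₃ ∧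
  G.Adj b₁ b₂ ∧ G.Adj b₂ b₃ ∧ G.Adj b₁ b₃ ∧
  (∀ v, v ∈ p₁.support → v ∉ p₂.support) ∧
  (∀ v, v ∈ p₁.support → v ∉ p₃.support) ∧
  (∀ v, v ∈ p₂.support → v ∉ p₃.support) ∧
  ∀ u v, u ∈ p₁.support ++ p₂.support ++ p₃.support →
    v ∈ p₁.support ++ p₂.support ++ p₃.support →
    (G.Adj u v ↔ s(u, v) ∈ p₁.edges ++ p₂.edges ++ p₃.edges ∨
      s(u, v) ∈ [s(a₁, a₂), s(a₂, a₃), s(a₁, a₃), s(b₁, b₂), s(b₂, b₃), s(b₁, b₃)])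

/-- `G` contains a prism as an induced subgraph. -/
def HasPrism (G : SimpleGraph V) : Prop :=
  ∃ (a₁ a₂ a₃ b₁ b₂ b₃ : V) (p₁ : G.Walk a₁ b₁) (p₂ : G.Walk a₂ b₂) (p₃ : G.Walk a₃ b₃),
    PrismWitness G a₁ a₂ a₃ b₁ b₂ b₃ p₁ p₂ p₃

/-- `G` contains a long prism (at least one path of length ≥ 2) as an induced subgraph. -/
def HasLongPrism (G : SimpleGraph V) : Prop :=
  ∃ (a₁ a₂ a₃ b₁ b₂ b₃ : V) (p₁ : G.Walk a₁ b₁) (p₂ : G.Walk a₂ b₂) (p₃ : G.Walk a₃ b₃),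
    PrismWitness G a₁ a₂ a₃ b₁ b₂ b₃ p₁ p₂ p₃ ∧
    (2 ≤ p₁.length ∨ 2 ≤ p₂.length ∨ 2 ≤ p₃.length)

/-- `c` is an induced cycle (hole when length ≥ 4) of `G`. -/
def IsInducedCycle (G : SimpleGraph V) {v : V} (c : G.Walk v v) : Prop :=
  c.IsCycle ∧ ∀ x ∈ c.support, ∀ y ∈ c.support, (G.Adj x y ↔ s(x, y) ∈ c.edges)

/-- `p` is an induced path of `G`. -/
def IsInducedPath (G : SimpleGraph V) {a b : V} (p : G.Walk a b) : Prop :=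
  p.IsPath ∧ ∀ u ∈ p.support, ∀ v ∈ p.support, (G.Adj u v ↔ s(u, v) ∈ p.edges)

/-- `G` contains a wheel: a hole together with a vertex having ≥ 3 neighbours on it. -/
def HasWheel (G : SimpleGraph V) : Prop :=
  ∃ (v x : V) (c : G.Walk v v), IsInducedCycle G c ∧ 4 ≤ c.length ∧ x ∉ c.support ∧
    ∃ y₁ y₂ y₃, y₁ ≠ y₂ ∧ y₁ ≠ y₃ ∧ y₂ ≠ y₃ ∧
      y₁ ∈ c.support ∧ y₂ ∈ c.support ∧ y₃ ∈ c.support ∧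
      G.Adj x y₁ ∧ G.Adj x y₂ ∧ G.Adj x y₃

/-- A sector of a wheel with rim `c` and centre `x`: a path contained in the rim whose
end-vertices are neighbours of `x` and whose internal vertices are not. -/
def IsSector (G : SimpleGraph V) {v : V} (c : G.Walk v v) (x : V) {s t : V}
    (q : G.Walk s t) : Prop :=
  q.IsPath ∧ (∀ e ∈ q.edges, e ∈ c.edges) ∧ G.Adj x s ∧ G.Adj x t ∧
  ∀ w ∈ q.support, w ≠ s → w ≠ t → ¬ G.Adj x w

/-- `G` contains a broken wheel: a wheel with at least two sectors of length ≥ 2. -/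
def HasBrokenWheel (G : SimpleGraph V) : Prop :=
  ∃ (v x : V) (c : G.Walk v v), IsInducedCycle G c ∧ 4 ≤ c.length ∧ x ∉ c.support ∧
    (∃ y₁ y₂ y₃, y₁ ≠ y₂ ∧ y₁ ≠ y₃ ∧ y₂ ≠ y₃ ∧
      y₁ ∈ c.support ∧ y₂ ∈ c.support ∧ y₃ ∈ c.support ∧
      G.Adj x y₁ ∧ G.Adj x y₂ ∧ G.Adj x y₃) ∧
    ∃ (s₁ t₁ s₂ t₂ : V) (q₁ : G.Walk s₁ t₁) (q₂ : G.Walk s₂ t₂),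
      IsSector G c x q₁ ∧ IsSector G c x q₂ ∧ 2 ≤ q₁.length ∧ 2 ≤ q₂.length ∧
      ∀ w, w ∈ q₁.support → w ∈ q₂.support → G.Adj x w

/-- A universally signable graph: no theta, pyramid, prism, or wheel induced subgraph. -/
def UniversallySignable (G : SimpleGraph V) : Prop :=
  ¬ HasTheta G ∧ ¬ HasPyramid G ∧ ¬ HasPrism G ∧ ¬ HasWheel G

/-- `G` has tree-width at most `w`. -/
def TreewidthLe (G : SimpleGraph V) (w : ℕ) : Prop :=
  ∃ (ι : Type) (T : SimpleGraph ι) (bag : ι → Set V),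
    T.IsTree ∧
    (∀ v, ∃ i, v ∈ bag i) ∧
    (∀ u v, G.Adj u v → ∃ i, u ∈ bag i ∧ v ∈ bag i) ∧
    (∀ v, (T.induce {i | v ∈ bag i}).Connected) ∧
    (∀ i, (bag i).ncard ≤ w + 1)

/-- The strong isometric path complexity of `G` is at most `s`: for every vertex `v`,
every isometric path of `G` can be vertex-covered by at most `s` isometric paths
rooted at `v`. -/
def SipcoLe (G : SimpleGraph V) (s : ℕ) : Prop :=
  ∀ v : V, ∀ ⦃x y : V⦄ (p : G.Walk x y), p.length = G.dist x y →
    ∃ n : ℕ, n ≤ s ∧ ∃ (e : Fin n → V) (Q : ∀ i, G.Walk v (e i)),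
      (∀ i, (Q i).length = G.dist v (e i)) ∧
      ∀ z ∈ p.support, ∃ i, z ∈ (Q i).support

/-- The strong isometric path complexity of `G`. -/
noncomputable def sipco (G : SimpleGraph V) : ℕ := sInf {s | SipcoLe G s}

/-- `P` induces exactly two connected components `C₁`, `C₂` in `G`. -/
def SplitsTwo (G : SimpleGraph V) (P C₁ C₂ : Set V) : Prop :=
  C₁ ∪ C₂ = P ∧ Disjoint C₁ C₂ ∧ C₁.Nonempty ∧ C₂.Nonempty ∧
  (G.induce C₁).Connected ∧ (G.induce C₂).Connected ∧
  ∀ u ∈ C₁, ∀ v ∈ C₂, ¬ G.Adj u v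

/-- The star of edges joining each vertex of `D` to `w`. -/
def starEdges (w : V) (D : Set V) : Set (Sym2 V) := {e | ∃ v ∈ D, e = s(v, w)}

/-- Vertices of `S` with a `G`-neighbour in `C`. -/
def Dset (G : SimpleGraph V) (S C : Set V) : Set V := {u ∈ S | ∃ v ∈ C, G.Adj u v}

/-- Admissible edge sets `E` produced by Algorithm 1 when processing a cluster `S`
with parent set `P`. -/
def ClusterEdges (G : SimpleGraph V) (S P : Set V) (E : Set (Sym2 V)) : Prop :=
  ((G.induce P).Connected ∧ ∃ w ∈ P, E = starEdges w S) ∨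
  ∃ C₁ C₂, SplitsTwo G P C₁ C₂ ∧ ∃ w₁ ∈ C₁, ∃ w₂ ∈ C₂,
    ((Dset G S C₁ ∩ Dset G S C₂ = ∅ ∧
       ((¬ (∃ u ∈ Dset G S C₁, ∃ v ∈ Dset G S C₂, G.Adj u v) ∧
          E = starEdges w₁ (Dset G S C₁) ∪ starEdges w₂ (Dset G S C₂)) ∨
        (∃ u ∈ Dset G S C₁, ∃ v ∈ Dset G S C₂, G.Adj u v ∧
          E = starEdges w₁ (Dset G S C₁) ∪ starEdges w₂ (Dset G S C₂) ∪ {s(u, v)})))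
     ∨
     ((Dset G S C₁ ∩ Dset G S C₂).Nonempty ∧
       ∃ u ∈ Dset G S C₁ ∩ Dset G S C₂,
         E = starEdges w₁ (Dset G S C₁) ∪
             starEdges w₂ (Dset G S C₂ \ Dset G S C₁) ∪ {s(u, w₂)}))

/-- `H` is a possible output of the cluster-rewiring algorithm (Algorithm 1) on `(G, r)`. -/
def IsAlgoOutput (G : SimpleGraph V) (r : V) (H : SimpleGraph V) : Prop :=
  ∃ f : Set V → Set (Sym2 V),
    (∀ S k, 1 ≤ k → IsCluster G r k S → ClusterEdges G S (parentSet G r k S) (f S)) ∧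
    H.edgeSet = ⋃ S ∈ {S : Set V | ∃ k, 1 ≤ k ∧ IsCluster G r k S}, f S

/-- The type of clusters of the layering partition of `G` rooted at `r`. -/
def ClusterType (G : SimpleGraph V) (r : V) : Type := {S : Set V // ∃ k, IsCluster G r k S}

/-- The layering tree: clusters, adjacent when `G` has an edge between them. -/
def layeringTree (G : SimpleGraph V) (r : V) : SimpleGraph (ClusterType G r) :=
  SimpleGraph.fromRel (fun S T => ∃ u ∈ S.1, ∃ v ∈ T.1, G.Adj u v)

/-- `A` is a connected component of `G - C`. -/
def IsCompOf (G : SimpleGraph V) (C A : Set V) : Prop :=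
  A.Nonempty ∧ Disjoint A C ∧ (G.induce A).Connected ∧
  ∀ u ∈ A, ∀ v, v ∉ A → v ∉ C → ¬ G.Adj u v


/-! Write `B` for the ball of radius `k - 1` around `r` and `P` for the parent set of `S`.
A vertex `x` reachable from `u ∈ S` in `G - P` stays outside `B`: an edge from `x` to a vertex
`y` at level `k - 1` forces `x` to be at level `k`, hence in `S` by maximality of the cluster,
hence `y ∈ P`. So `P` separates `r` from `u` as soon as `r ∉ P`, i.e. `k ≥ 2`.
Conversely, if `C ⊂ P` misses `x ∈ P` and `s ∈ S` is a neighbour of `x`, then a shortest path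
from `r` to `x`, the edge `xs` and a path from `s` to `u` outside `B` together avoid `C`. -/

section ConnOutside

variable {G : SimpleGraph V} {B C : Set V} {u v w : V}

lemma connOutside_refl (h : u ∉ B) : ConnOutside G B u u := ⟨h, h, .refl _⟩

lemma ConnOutside.symm (h : ConnOutside G B u v) : ConnOutside G B v u :=
  let ⟨hu, hv, hr⟩ := h; ⟨hv, hu, hr.symm⟩

lemma ConnOutside.trans (h₁ : ConnOutside G B u v) (h₂ : ConnOutside G B v w) :
    ConnOutside G B u w :=
  let ⟨hu, _, hr₁⟩ := h₁; let ⟨_, hw, hr₂⟩ := h₂; ⟨hu, hw, hr₁.trans hr₂⟩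

lemma connOutside_of_adj (hu : u ∉ B) (hv : v ∉ B) (h : G.Adj u v) : ConnOutside G B u v :=
  ⟨hu, hv, Adj.reachable (G := G.induce Bᶜ) h⟩

lemma ConnOutside.mem_of_adj_closed {T : Set V} (h : ConnOutside G B u v) (hu : u ∈ T)
    (hT : ∀ x ∈ T, ∀ y ∉ B, G.Adj x y → y ∈ T) : v ∈ T := by
  obtain ⟨_, _, ⟨p⟩⟩ := h
  suffices ∀ {a b : ↥Bᶜ} (p : (G.induce Bᶜ).Walk a b), a.1 ∈ T → b.1 ∈ T from this p hu
  intro a b p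
  induction p with
  | nil => exact id
  | @cons _ b _ hadj _ ih => exact fun ha => ih (hT _ ha _ b.2 hadj)

lemma ConnOutside.mono (hCB : C ⊆ B) (h : ConnOutside G B u v) : ConnOutside G C u v :=
  h.mem_of_adj_closed (T := {y | ConnOutside G C u y}) (connOutside_refl fun hu => h.1 (hCB hu))
    fun _ hx _ hy hxy => hx.trans (connOutside_of_adj hx.2.1 (fun hyC => hy (hCB hyC)) hxy)

end ConnOutside

section Distance

variable {G : SimpleGraph V} {C : Set V} {r x y : V}

lemma dist_le_dist_add_one_of_adj (h : G.Adj x y) : G.dist r y ≤ G.dist r x + 1 := by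
  rcases h.diff_dist_adj (u := r) with h | h | h <;> omega

lemma exists_adj_dist_add_one_eq (hG : G.Connected) (hx : x ≠ r) :
    ∃ y, G.Adj y x ∧ G.dist r y + 1 = G.dist r x := by
  obtain ⟨p, hp⟩ := hG.exists_walk_length_eq_dist r x
  have hnil : ¬ p.Nil := fun h => hx h.eq.symm
  refine ⟨p.penultimate, p.adj_penultimate hnil, ?_⟩
  have := dist_le p.dropLast
  have := Walk.length_dropLast_add_one hnil
  have := dist_le_dist_add_one_of_adj (r := r) (p.adj_penultimate hnil)
  omega

/-- Along a shortest path from `r` to `x`, every vertex but `x` is strictly closer to `r`. -/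
lemma connOutside_of_forall_dist_le (hG : G.Connected) (hx : x ∉ C)
    (hC : ∀ w ∈ C, G.dist r x ≤ G.dist r w) : ConnOutside G C r x := by
  induction hd : G.dist r x using Nat.strong_induction_on generalizing x with
  | _ d ih =>
  rcases eq_or_ne x r with rfl | hxr
  · exact connOutside_refl hx
  obtain ⟨y, hyx, hy⟩ := exists_adj_dist_add_one_eq hG hxr
  have hyC : y ∉ C := fun h => by have := hC y h; omega
  have hry : ConnOutside G C r y :=
    ih _ (by omega) hyC (fun w hw => by have := hC w hw; omega) rfl
  exact hry.trans (connOutside_of_adj hyC hx hyx)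

end Distance

namespace IsCluster

variable {G : SimpleGraph V} {r : V} {k : ℕ} {S C : Set V} {u v : V}

lemma mem_of_connOutside (hS : IsCluster G r k S) (hu : u ∈ S) (hv : G.dist r v = k)
    (h : ConnOutside G {w | G.dist r w < k} u v) : v ∈ S := by
  obtain ⟨-, hdist, hconn, hmax⟩ := hS
  have hfrom_u : ∀ a ∈ insert v S, ConnOutside G {w | G.dist r w < k} u a := by
    rintro a (rfl | ha)
    exacts [h, hconn u hu a ha]
  refine hmax (insert v S) (Set.subset_insert v S) ?_
    (fun a ha b hb => (hfrom_u a ha).symm.trans (hfrom_u b hb)) (Set.mem_insert v S)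
  rintro a (rfl | ha)
  exacts [hv, hdist a ha]

lemma parentSet_one (hG : G.Connected) (hS : IsCluster G r 1 S) : parentSet G r 1 S = {r} := by
  obtain ⟨⟨u, hu⟩, hdist, -⟩ := hS
  ext v
  simp only [parentSet, Nat.sub_self, hG.dist_eq_zero_iff, Set.mem_ofPred_eq,
    Set.mem_singleton_iff]
  constructor
  · exact fun h => h.1.symm
  · rintro rfl
    exact ⟨rfl, u, hu, dist_eq_one_iff_adj.mp (hdist u hu)⟩

lemma connOutside_ball_of_connOutside_parentSet (hS : IsCluster G r k S) (hu : u ∈ S)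
    (h : ConnOutside G (parentSet G r k S) u v) : ConnOutside G {w | G.dist r w < k} u v := by
  refine h.mem_of_adj_closed (T := {y | ConnOutside G {w | G.dist r w < k} u y})
    (connOutside_refl (by simp [hS.2.1 u hu])) fun x hx y hyP hxy => ?_
  have hxk : k ≤ G.dist r x := not_lt.mp hx.2.1
  have hyk : k ≤ G.dist r y := by
    by_contra hyk
    have := dist_le_dist_add_one_of_adj (r := r) hxy.symm
    have := dist_le_dist_add_one_of_adj (r := r) hxy
    have hxS : x ∈ S := hS.mem_of_connOutside hu (by omega) hx
    exact hyP ⟨by omega, x, hxS, hxy.symm⟩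
  exact hx.trans (connOutside_of_adj hx.2.1 (not_lt.mpr hyk) hxy)

lemma isSep_parentSet (hS : IsCluster G r k S) (hk : 2 ≤ k) (hu : u ∈ S) :
    IsSep G r u (parentSet G r k S) := by
  refine ⟨fun hr => ?_, fun hu' => ?_, fun h => ?_⟩
  · have := hr.1
    simp only [dist_self] at this
    omega
  · have := hu'.1
    rw [hS.2.1 u hu] at this
    omega
  · obtain ⟨-, hr, -⟩ := hS.connOutside_ball_of_connOutside_parentSet hu h.symm
    exact hr (show G.dist r r < k by rw [dist_self]; omega)

lemma not_isSep_of_ssubset_parentSet (hG : G.Connected) (hS : IsCluster G r k S) (hk : 1 ≤ k)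
    (hu : u ∈ S) (hC : C ⊂ parentSet G r k S) : ¬ IsSep G r u C := by
  rintro ⟨-, -, hsep⟩
  obtain ⟨x, ⟨hxd, s, hs, hxs⟩, hxC⟩ := Set.exists_of_ssubset hC
  have hCdist : ∀ w ∈ C, G.dist r w = k - 1 := fun w hw => (hC.1 hw).1
  have hsC : s ∉ C := fun h => by have := hCdist s h; have := hS.2.1 s hs; omega
  have hrx : ConnOutside G C r x :=
    connOutside_of_forall_dist_le hG hxC fun w hw => (hCdist w hw ▸ hxd).le
  have hsu : ConnOutside G C s u :=
    (hS.2.2.1 s hs u hu).mono fun w hw => by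
      show G.dist r w < k
      have := hCdist w hw
      omega
  exact hsep (hrx.trans ((connOutside_of_adj hxC hsC hxs).trans hsu))

end IsCluster

theorem stmt0_general {V : Type} (G : SimpleGraph V) (hG : G.Connected) (r : V)
    (k : ℕ) (hk : 1 ≤ k) (S : Set V) (hS : IsCluster G r k S)
    (hP : parentSet G r k S ≠ {r}) :
    ∀ u ∈ S, IsMinSep G r u (parentSet G r k S) := by
  intro u hu
  have hk2 : 2 ≤ k := by
    by_contra hk2
    obtain rfl : k = 1 := by omega
    exact hP (hS.parentSet_one hG)
  exact ⟨hS.isSep_parentSet hk2 hu,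
    fun C hC => hS.not_isSep_of_ssubset_parentSet hG hk hu hC⟩

theorem stmt0 {V : Type} [Fintype V] (G : SimpleGraph V) (hG : G.Connected) (r : V)
    (k : ℕ) (hk : 1 ≤ k) (S : Set V) (hS : IsCluster G r k S)
    (hP : parentSet G r k S ≠ {r}) :
    ∀ u ∈ S, IsMinSep G r u (parentSet G r k S) :=
  stmt0_general G hG r k hk S hS hP

end Paper
end

section
/- Let X and Y be connected graphs on the same vertex set, r a vertex, and t, k positive integers such that (i) for every edge ab of X, the distance between a and b in Y is at most k+1, and (ii) for every isometric path Q of X with endpoint r and any two vertices a, b on Q, dist_Y(a,b) ≤ dist_X(a,b) + t. Then for all vertices u, v: dist_Y(u,v) ≤ dist_X(u,v) + t·σ + k·(σ−1), where σ is the strong isometric path complexity of X. -/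
open SimpleGraph

namespace Paper

variable {V : Type}

lemma dist_getVert_le (X : SimpleGraph V) (hX : X.Connected) {u v : V} (p : X.Walk u v) :
    ∀ b, b ≤ p.length → ∀ a, a ≤ b → X.dist (p.getVert a) (p.getVert b) ≤ b - a := by
  intro b
  induction b with
  | zero =>
    intro _ a ha
    simp only [Nat.le_zero] at ha
    subst ha
    simp [SimpleGraph.dist_self]
  | succ b ih =>
    intro hb a ha
    rcases Nat.lt_or_ge a (b + 1) with h | h
    · have ha' : a ≤ b := by omega
      have h1 : X.dist (p.getVert a) (p.getVert (b+1)) ≤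
          X.dist (p.getVert a) (p.getVert b) + X.dist (p.getVert b) (p.getVert (b+1)) :=
        hX.dist_triangle (v := p.getVert b)
      have hadj : X.Adj (p.getVert b) (p.getVert (b+1)) :=
        p.adj_getVert_succ (by omega)
      have h2 : X.dist (p.getVert b) (p.getVert (b+1)) ≤ 1 := by
        simpa using X.dist_le hadj.toWalk
      have h3 := ih (by omega) a ha'
      omega
    · have : a = b + 1 := by omega
      subst this
      simp [SimpleGraph.dist_self]

lemma sipcoLe_card [Fintype V] (X : SimpleGraph V) (hX : X.Connected) :
    SipcoLe X (Fintype.card V) := by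
  classical
  intro v x y p hp
  refine ⟨p.length + 1, ?_, fun i => p.getVert i, fun i =>
    (hX.exists_walk_length_eq_dist v (p.getVert i)).choose, fun i =>
    (hX.exists_walk_length_eq_dist v (p.getVert i)).choose_spec, ?_⟩
  · have h1 : X.dist x y ≤ p.bypass.length := X.dist_le p.bypass
    have h2 : p.bypass.length < Fintype.card V := p.bypass_isPath.length_lt
    omega
  · intro z hz
    obtain ⟨m, hm, hmle⟩ := Walk.mem_support_iff_exists_getVert.mp hz
    refine ⟨⟨m, by omega⟩, ?_⟩
    have := ((hX.exists_walk_length_eq_dist v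
      (p.getVert (⟨m, by omega⟩ : Fin (p.length+1)))).choose).end_mem_support
    simpa [hm] using this

lemma sipco_spec [Fintype V] (X : SimpleGraph V) (hX : X.Connected) :
    SipcoLe X (sipco X) := by
  have hne : {s | SipcoLe X s}.Nonempty := ⟨Fintype.card V, sipcoLe_card X hX⟩
  exact Nat.sInf_mem hne


theorem stmt1 {V : Type} [Fintype V] (X Y : SimpleGraph V) (hX : X.Connected)
    (hY : Y.Connected) (r : V) (t k : ℕ) (ht : 1 ≤ t) (hk : 1 ≤ k)
    (h1 : ∀ a b : V, X.Adj a b → Y.dist a b ≤ k + 1)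
    (h2 : ∀ (z : V) (Q : X.Walk r z), Q.length = X.dist r z →
      ∀ a ∈ Q.support, ∀ b ∈ Q.support, Y.dist a b ≤ X.dist a b + t) :
    ∀ u v : V, Y.dist u v ≤ X.dist u v + t * sipco X + k * (sipco X - 1) := by
  classical
  intro u v
  obtain ⟨p, hp⟩ := hX.exists_walk_length_eq_dist u v
  obtain ⟨n, hn, e, Q, hQiso, hcov⟩ := sipco_spec X hX r p hp
  set L := p.length with hL
  set A : ℕ → Finset (Fin n) := fun j =>
    Finset.univ.filter (fun i => ∃ m, j ≤ m ∧ m ≤ L ∧ p.getVert m ∈ (Q i).support) with hA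
  -- every position on p is covered by some Q i
  have hposcov : ∀ j, j ≤ L → ∃ i, p.getVert j ∈ (Q i).support := by
    intro j hj
    exact hcov (p.getVert j) (Walk.mem_support_iff_exists_getVert.mpr ⟨j, rfl, hj⟩)
  -- Y-distance bound along each Q i
  have hQbound : ∀ i, ∀ a ∈ (Q i).support, ∀ b ∈ (Q i).support,
      Y.dist a b ≤ X.dist a b + t := fun i => h2 (e i) (Q i) (hQiso i)
  have key : ∀ c, ∀ j, j ≤ L → (A j).card ≤ c →
      Y.dist (p.getVert j) v ≤ (L - j) + t * c + k * (c - 1) := by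
    intro c
    induction c with
    | zero =>
      intro j hj hcard
      obtain ⟨i, hi⟩ := hposcov j hj
      have : i ∈ A j := by
        simp only [hA, Finset.mem_filter, Finset.mem_univ, true_and]
        exact ⟨j, le_refl j, hj, hi⟩
      have := Finset.card_pos.mpr ⟨i, this⟩
      omega
    | succ c ih =>
      intro j hj hcard
      obtain ⟨i0, hi0⟩ := hposcov j hj
      set T : Finset ℕ := (Finset.range (L + 1)).filter
        (fun m => j ≤ m ∧ ∃ i, p.getVert j ∈ (Q i).support ∧ p.getVert m ∈ (Q i).support)
        with hT
      have hjT : j ∈ T := by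
        simp only [hT, Finset.mem_filter, Finset.mem_range]
        exact ⟨by omega, le_refl j, i0, hi0, hi0⟩
      have hTne : T.Nonempty := ⟨j, hjT⟩
      set q := T.max' hTne with hq
      have hqT : q ∈ T := T.max'_mem hTne
      obtain ⟨hqL, hjq, i, hji, hqi⟩ : q ∈ Finset.range (L + 1) ∧ j ≤ q ∧
          ∃ i, p.getVert j ∈ (Q i).support ∧ p.getVert q ∈ (Q i).support := by
        simpa only [hT, Finset.mem_filter, and_assoc] using hqT
      have hqL' : q ≤ L := by simpa using Nat.lt_succ_iff.mp (Finset.mem_range.mp hqL)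
      have hYjq : Y.dist (p.getVert j) (p.getVert q) ≤ (q - j) + t := by
        have h1' := hQbound i _ hji _ hqi
        have h2' := dist_getVert_le X hX p q hqL' j hjq
        omega
      rcases Nat.lt_or_ge q L with hqlt | hqge
      · -- q < L : jump to q + 1
        have hadj : X.Adj (p.getVert q) (p.getVert (q + 1)) := p.adj_getVert_succ hqlt
        have hYq : Y.dist (p.getVert q) (p.getVert (q + 1)) ≤ k + 1 := h1 _ _ hadj
        -- i is in A j but not in A (q+1)
        have hiAj : i ∈ A j := by
          simp only [hA, Finset.mem_filter, Finset.mem_univ, true_and]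
          exact ⟨j, le_refl j, hj, hji⟩
        have hiNot : i ∉ A (q + 1) := by
          simp only [hA, Finset.mem_filter, Finset.mem_univ, true_and]
          rintro ⟨m, hm1, hm2, hm3⟩
          have : m ∈ T := by
            simp only [hT, Finset.mem_filter, Finset.mem_range]
            exact ⟨by omega, by omega, i, hji, hm3⟩
          have := T.le_max' m this
          omega
        have hsub : A (q + 1) ⊆ A j := by
          intro i' hi'
          simp only [hA, Finset.mem_filter, Finset.mem_univ, true_and] at hi' ⊢
          obtain ⟨m, hm1, hm2, hm3⟩ := hi'
          exact ⟨m, by omega, hm2, hm3⟩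
        have hsub' : A (q + 1) ⊆ (A j).erase i := by
          intro i' hi'
          exact Finset.mem_erase.mpr ⟨fun h => hiNot (h ▸ hi'), hsub hi'⟩
        have hcard' : (A (q + 1)).card ≤ c := by
          have := Finset.card_le_card hsub'
          have := Finset.card_erase_of_mem hiAj
          have := Finset.card_pos.mpr ⟨i, hiAj⟩
          omega
        have hApos : 1 ≤ (A (q + 1)).card := by
          obtain ⟨i', hi'⟩ := hposcov (q + 1) (by omega)
          refine Finset.card_pos.mpr ⟨i', ?_⟩
          simp only [hA, Finset.mem_filter, Finset.mem_univ, true_and]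
          exact ⟨q + 1, le_refl _, by omega, hi'⟩
        have hc1 : 1 ≤ c := le_trans hApos hcard'
        have hIH := ih (q + 1) (by omega) hcard'
        have htri1 : Y.dist (p.getVert j) v ≤
            Y.dist (p.getVert j) (p.getVert q) + Y.dist (p.getVert q) v :=
          hY.dist_triangle
        have htri2 : Y.dist (p.getVert q) v ≤
            Y.dist (p.getVert q) (p.getVert (q + 1)) + Y.dist (p.getVert (q + 1)) v :=
          hY.dist_triangle
        obtain ⟨c', rfl⟩ : ∃ c', c = c' + 1 := ⟨c - 1, by omega⟩
        have e1 : t * (c' + 1 + 1) = t * (c' + 1) + t := by ring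
        have e2 : k * (c' + 1 + 1 - 1) = k * (c' + 1 - 1) + k := by
          simp only [Nat.add_sub_cancel]; ring
        omega
      · -- q = L : finish
        have hqL2 : q = L := by omega
        have hv : p.getVert q = v := by rw [hqL2]; exact p.getVert_length
        rw [hv] at hYjq
        have e1 : t ≤ t * (c + 1) := by
          calc t = t * 1 := by ring
          _ ≤ t * (c + 1) := Nat.mul_le_mul_left t (by omega)
        omega
  -- conclude
  have hA0 : (A 0).card ≤ sipco X := by
    have : (A 0).card ≤ n := by
      have := Finset.card_le_card (Finset.subset_univ (A 0))
      simpa using this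
    omega
  have hmain := key (A 0).card 0 (Nat.zero_le L) (le_refl _)
  rw [p.getVert_zero] at hmain
  have hm1 : t * (A 0).card ≤ t * sipco X := Nat.mul_le_mul_left t hA0
  have hm2 : k * ((A 0).card - 1) ≤ k * (sipco X - 1) :=
    Nat.mul_le_mul_left k (by omega)
  have hLd : L = X.dist u v := hp
  omega

end Paper
end

section
/- Let G be a K_{2,3}-induced-minor-free graph, r a vertex, S a cluster with respect to r, and F the subgraph of G induced by the parent set of S. Then: (a) F has at most two connected components; (b) if F is connected, then F has diameter at most three; (c) if F has exactly two connected components, then each connected component is a clique. -/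
open SimpleGraph

namespace Paper

variable {V : Type}

/-- The obvious graph hom from an induced subgraph into the ambient graph. -/
private def inducedHomG (G : SimpleGraph V) (s : Set V) : G.induce s →g G where
  toFun := Subtype.val
  map_rel' := fun h => h

/-- If all vertices of a walk lie in `A`, its endpoints are reachable in `G.induce A`. -/
private lemma reach_ind {G : SimpleGraph V} {A : Set V} :
    ∀ {x y : V} (p : G.Walk x y), (∀ v ∈ p.support, v ∈ A) →
      ∀ (hx : x ∈ A) (hy : y ∈ A), (G.induce A).Reachable ⟨x, hx⟩ ⟨y, hy⟩ := by
  intro x y p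
  induction p with
  | nil => intro _ hx hy; exact Reachable.refl _
  | @cons a b c hadj q ih =>
    intro h hx hy
    have hb : b ∈ A := h b (by simp)
    have hAdj : (G.induce A).Adj ⟨a, hx⟩ ⟨b, hb⟩ := hadj
    exact hAdj.reachable.trans (ih (fun v hv => h v (by simp [hv])) hb hy)

private lemma dist_getVert_le_s3 {W : Type} {H : SimpleGraph W} (hH : H.Connected) {x y : W}
    (p : H.Walk x y) (i : ℕ) : ∀ j, i ≤ j → H.dist (p.getVert i) (p.getVert j) ≤ j - i := by
  intro j hij
  induction j, hij using Nat.le_induction with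
  | base => simp
  | succ j hij ih =>
    by_cases hj : j < p.length
    · have hadj := p.adj_getVert_succ hj
      have h1 : H.dist (p.getVert j) (p.getVert (j + 1)) ≤ 1 :=
        (SimpleGraph.dist_le hadj.toWalk).trans (by simp)
      have h2 := hH.dist_triangle (u := p.getVert i) (v := p.getVert j) (w := p.getVert (j + 1))
      omega
    · rw [show p.getVert (j + 1) = p.getVert j from by
        rw [p.getVert_of_length_le (by omega), p.getVert_of_length_le (by omega)]]
      omega

private lemma exists_pred {G : SimpleGraph V} (hG : G.Connected) {r p : V} {d : ℕ}
    (hd : G.dist r p = d + 1) : ∃ q, G.Adj q p ∧ G.dist r q ≤ d := by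
  obtain ⟨w, hw⟩ := (hG r p).exists_walk_length_eq_dist
  rw [hd] at hw
  refine ⟨w.getVert d, ?_, ?_⟩
  · have := w.adj_getVert_succ (by omega : d < w.length)
    rwa [show d + 1 = w.length from by omega, w.getVert_length] at this
  · have := dist_getVert_le_s3 hG w 0 d (Nat.zero_le _)
    simpa using this

private lemma connected_induce_singleton (G : SimpleGraph V) (a : V) :
    (G.induce {a}).Connected := by
  haveI : Nonempty ↥({a} : Set V) := ⟨⟨a, rfl⟩⟩
  refine ⟨fun x y => ?_⟩
  have : x = y := Subtype.ext (by
    rcases x with ⟨x, hx⟩; rcases y with ⟨y, hy⟩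
    simp only [Set.mem_singleton_iff] at hx hy; simp [hx, hy])
  exact this ▸ Reachable.refl _

private lemma comp_supp_connected {G : SimpleGraph V} {P : Set V}
    (c : (G.induce P).ConnectedComponent) :
    (G.induce (Subtype.val '' c.supp)).Connected := by
  classical
  obtain ⟨x, hx⟩ := c.exists_rep
  have hxs : x ∈ c.supp := by rwa [ConnectedComponent.mem_supp_iff]
  haveI : Nonempty ↥(Subtype.val '' c.supp) := ⟨⟨x.1, ⟨x, hxs, rfl⟩⟩⟩
  refine ⟨fun u v => ?_⟩
  suffices H : ∀ w (hw : w ∈ Subtype.val '' c.supp),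
      (G.induce (Subtype.val '' c.supp)).Reachable ⟨w, hw⟩ ⟨x.1, ⟨x, hxs, rfl⟩⟩ by
    rcases u with ⟨u, hu⟩; rcases v with ⟨v, hv⟩
    exact (H u hu).trans (H v hv).symm
  rintro w ⟨z, hz, rfl⟩
  rw [ConnectedComponent.mem_supp_iff] at hz
  obtain ⟨q⟩ := ConnectedComponent.exact (hz.trans hx.symm)
  have hsupp : ∀ v ∈ (q.map (inducedHomG G P)).support, v ∈ Subtype.val '' c.supp := by
    intro v hv
    rw [SimpleGraph.Walk.support_map, List.mem_map] at hv
    obtain ⟨z', hz', rfl⟩ := hv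
    refine ⟨z', ?_, rfl⟩
    rw [ConnectedComponent.mem_supp_iff, ← hx]
    exact ConnectedComponent.sound ⟨q.dropUntil z' hz'⟩
  exact reach_ind _ hsupp _ _

/-- Core lemma: three nonempty, connected, pairwise disjoint and pairwise non-adjacent
subsets of the parent set of a cluster at level `k ≥ 2` yield a `K₂,₃` induced minor. -/
private lemma core {G : SimpleGraph V} (hG : G.Connected)
    (hfree : K23Free G) {r : V} {k : ℕ} (hk : 2 ≤ k) {S : Set V}
    (hS : IsCluster G r k S) (A : Fin 3 → Set V)
    (hA : ∀ i, A i ⊆ parentSet G r k S)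
    (hne : ∀ i, (A i).Nonempty) (hAconn : ∀ i, (G.induce (A i)).Connected)
    (hdisj : ∀ i j, i ≠ j → Disjoint (A i) (A j))
    (hnadj : ∀ i j, i ≠ j → ∀ u ∈ A i, ∀ v ∈ A j, ¬ G.Adj u v) : False := by
  classical
  obtain ⟨u₀, hu₀⟩ := hS.1
  have hdistS : ∀ v ∈ S, G.dist r v = k := hS.2.1
  set Bc : Set V := {w | G.dist r w < k}ᶜ with hBc
  have hu₀c : u₀ ∈ Bc := by simp [hBc, hdistS u₀ hu₀]
  set T : Set V := {w | ∃ hw : w ∈ Bc, (G.induce Bc).Reachable ⟨w, hw⟩ ⟨u₀, hu₀c⟩} with hT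
  have hTk : ∀ w ∈ T, k ≤ G.dist r w := by
    rintro w ⟨hw, -⟩
    simpa [hBc] using hw
  have hST : S ⊆ T := by
    intro v hv
    obtain ⟨hv', hu', hreach⟩ := hS.2.2.1 v hv u₀ hu₀
    exact ⟨hv', hreach⟩
  have hu₀T : u₀ ∈ T := ⟨hu₀c, Reachable.refl _⟩
  have hTconn : (G.induce T).Connected := by
    classical
    haveI : Nonempty ↥T := ⟨⟨u₀, hu₀T⟩⟩
    refine ⟨fun a b => ?_⟩
    suffices H : ∀ w (hw : w ∈ T), (G.induce T).Reachable ⟨w, hw⟩ ⟨u₀, hu₀T⟩ by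
      rcases a with ⟨a, ha⟩; rcases b with ⟨b, hb⟩
      exact (H a ha).trans (H b hb).symm
    rintro w ⟨hwB, hreach⟩
    obtain ⟨pw⟩ := hreach
    have hsupp : ∀ v ∈ (pw.map (inducedHomG G Bc)).support, v ∈ T := by
      intro v hv
      rw [SimpleGraph.Walk.support_map, List.mem_map] at hv
      obtain ⟨z, hz, rfl⟩ := hv
      exact ⟨z.2, ⟨pw.dropUntil z hz⟩⟩
    exact reach_ind _ hsupp _ _
  set B' : Set V := {w | G.dist r w ≤ k - 2} with hB'
  have hrB' : r ∈ B' := by simp [hB', SimpleGraph.dist_self]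
  have hB'conn : (G.induce B').Connected := by
    haveI : Nonempty ↥B' := ⟨⟨r, hrB'⟩⟩
    refine ⟨fun a b => ?_⟩
    suffices H : ∀ w (hw : w ∈ B'), (G.induce B').Reachable ⟨r, hrB'⟩ ⟨w, hw⟩ by
      rcases a with ⟨a, ha⟩; rcases b with ⟨b, hb⟩
      exact (H a ha).symm.trans (H b hb)
    intro w hw
    obtain ⟨p, hp⟩ := (hG r w).exists_walk_length_eq_dist
    have hsupp : ∀ v ∈ p.support, v ∈ B' := by
      intro v hv
      have h1 : G.dist r v ≤ (p.takeUntil v hv).length := SimpleGraph.dist_le _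
      have h2 := p.length_takeUntil_le hv
      have h3 : G.dist r w ≤ k - 2 := hw
      simp only [hB', Set.mem_setOf_eq]
      omega
    exact reach_ind p hsupp hrB' hw
  -- per-branch witnesses
  have hPmem : ∀ i, ∀ x ∈ A i, G.dist r x = k - 1 ∧ ∃ u ∈ S, G.Adj x u := fun i x hx => hA i hx
  have hwit : ∀ i : Fin 3, ∃ x ∈ A i, ∃ q ∈ B', G.Adj q x ∧ ∃ u ∈ T, G.Adj x u := by
    intro i
    obtain ⟨x, hx⟩ := hne i
    obtain ⟨hxd, u, huS, hxu⟩ := hPmem i x hx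
    obtain ⟨q, hq1, hq2⟩ := exists_pred hG (show G.dist r x = (k - 2) + 1 by omega)
    exact ⟨x, hx, q, hq2, hq1, u, hST huS, hxu⟩
  -- basic distance facts
  have hAd : ∀ i, ∀ x ∈ A i, G.dist r x = k - 1 := fun i x hx => (hPmem i x hx).1
  have hB'd : ∀ w ∈ B', G.dist r w ≤ k - 2 := fun w hw => hw
  -- non-adjacency between B' and T
  have hnadjB'T : ∀ w ∈ B', ∀ t ∈ T, ¬ G.Adj w t := by
    intro w hw t ht hadj
    have h1 : G.dist w t ≤ 1 := (SimpleGraph.dist_le hadj.toWalk).trans (by simp)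
    have h2 := hG.dist_triangle (u := r) (v := w) (w := t)
    have h3 := hTk t ht
    have h4 := hB'd w hw
    omega
  -- non-adjacency between B' and A i, T and A i: not needed (those pairs are adjacent sides)
  -- disjointness
  have hdB'T : Disjoint B' T := by
    rw [Set.disjoint_left]
    intro w hw hwT
    have := hTk w hwT; have := hB'd w hw; omega
  have hdB'A : ∀ i, Disjoint B' (A i) := by
    intro i
    rw [Set.disjoint_left]
    intro w hw hwA
    have := hAd i w hwA; have := hB'd w hw; omega
  have hdTA : ∀ i, Disjoint T (A i) := by
    intro i
    rw [Set.disjoint_left]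
    intro w hw hwA
    have := hAd i w hwA; have := hTk w hw; omega
  -- build the K23 minor model
  apply hfree
  refine ⟨Sum.elim ![B', T] A, ?_, ?_, ?_, ?_⟩
  · rintro (i | i)
    · fin_cases i
      · exact ⟨r, hrB'⟩
      · exact ⟨u₀, hu₀T⟩
    · exact hne i
  · rintro (i | i)
    · fin_cases i
      · exact hB'conn
      · exact hTconn
    · exact hAconn i
  · rintro (i | i) (j | j) hab
    · fin_cases i <;> fin_cases j <;>
        first
          | exact absurd rfl hab
          | exact hdB'T
          | exact hdB'T.symm
    · fin_cases i
      · exact hdB'A j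
      · exact hdTA j
    · fin_cases j
      · exact (hdB'A i).symm
      · exact (hdTA i).symm
    · exact hdisj i j (by simpa using hab)
  · rintro (i | i) (j | j) hab
    · constructor
      · intro h; simp [completeBipartiteGraph] at h
      · rintro ⟨u, hu, v, hv, hadj⟩
        exfalso
        fin_cases i <;> fin_cases j <;>
          first
            | exact absurd rfl hab
            | exact hnadjB'T u hu v hv hadj
            | exact hnadjB'T v hv u hu hadj.symm
    · constructor
      · intro _
        obtain ⟨x, hx, q, hqB, hqadj, u, huT, hxadj⟩ := hwit j
        fin_cases i
        · exact ⟨q, hqB, x, hx, hqadj⟩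
        · exact ⟨u, huT, x, hx, hxadj.symm⟩
      · intro _; simp [completeBipartiteGraph]
    · constructor
      · intro _
        obtain ⟨x, hx, q, hqB, hqadj, u, huT, hxadj⟩ := hwit i
        fin_cases j
        · exact ⟨x, hx, q, hqB, hqadj.symm⟩
        · exact ⟨x, hx, u, huT, hxadj⟩
      · intro _; simp [completeBipartiteGraph]
    · constructor
      · intro h; simp [completeBipartiteGraph] at h
      · rintro ⟨u, hu, v, hv, hadj⟩
        exact absurd hadj (hnadj i j (by simpa using hab) u hu v hv)

theorem stmt3 {V : Type} [Fintype V] (G : SimpleGraph V) (hG : G.Connected)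
    (hfree : K23Free G) (r : V) (k : ℕ) (hk : 1 ≤ k) (S : Set V)
    (hS : IsCluster G r k S) :
    Nat.card (G.induce (parentSet G r k S)).ConnectedComponent ≤ 2 ∧
    ((G.induce (parentSet G r k S)).Connected →
      ∀ u v : parentSet G r k S, (G.induce (parentSet G r k S)).dist u v ≤ 3) ∧
    (∀ C₁ C₂ : Set V, SplitsTwo G (parentSet G r k S) C₁ C₂ →
      G.IsClique C₁ ∧ G.IsClique C₂) := by
  classical
  rcases Nat.lt_or_ge k 2 with hk2 | hk2
  · -- k = 1 : the parent set is contained in {r}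
    have hk1 : k = 1 := by omega
    subst hk1
    have hPr : parentSet G r 1 S ⊆ {r} := by
      rintro v ⟨hd, -⟩
      have h0 : G.dist r v = 0 := by simpa using hd
      obtain ⟨w, hw⟩ := (hG r v).exists_walk_length_eq_dist
      rw [h0] at hw
      exact (SimpleGraph.Walk.eq_of_length_eq_zero hw).symm
    have hsub : Subsingleton ((G.induce (parentSet G r 1 S)).ConnectedComponent) := by
      constructor
      intro c d
      obtain ⟨x, hx⟩ := c.exists_rep
      obtain ⟨y, hy⟩ := d.exists_rep
      have hxy : x = y := Subtype.ext (by
        have h1 := hPr x.2; have h2 := hPr y.2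
        simp only [Set.mem_singleton_iff] at h1 h2
        rw [h1, h2])
      rw [← hx, ← hy, hxy]
    refine ⟨?_, ?_, ?_⟩
    · haveI := Fintype.ofFinite ((G.induce (parentSet G r 1 S)).ConnectedComponent)
      rw [Nat.card_eq_fintype_card]
      have := Fintype.card_le_one_iff_subsingleton.mpr hsub
      omega
    · intro _ u v
      have huv : u = v := Subtype.ext (by
        have h1 := hPr u.2; have h2 := hPr v.2
        simp only [Set.mem_singleton_iff] at h1 h2
        rw [h1, h2])
      rw [huv]
      simp [SimpleGraph.dist_self]
    · intro C₁ C₂ hsp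
      exfalso
      obtain ⟨hun, hdis, ⟨x, hx⟩, ⟨y, hy⟩, -, -, -⟩ := hsp
      have hx' : x = r := by
        have := hPr (hun ▸ Set.mem_union_left C₂ hx)
        simpa using this
      have hy' : y = r := by
        have := hPr (hun ▸ Set.mem_union_right C₁ hy)
        simpa using this
      exact Set.disjoint_left.mp hdis hx (by rw [hx', ← hy']; exact hy)
  · -- k ≥ 2
    refine ⟨?_, ?_, ?_⟩
    · -- (a) at most two components
      by_contra hcard
      push_neg at hcard
      haveI := Fintype.ofFinite ((G.induce (parentSet G r k S)).ConnectedComponent)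
      rw [Nat.card_eq_fintype_card] at hcard
      obtain ⟨c₁, c₂, c₃, h12, h13, h23⟩ := Fintype.two_lt_card_iff.mp hcard
      set cs : Fin 3 → (G.induce (parentSet G r k S)).ConnectedComponent := ![c₁, c₂, c₃]
        with hcsdef
      have hcs : ∀ i j : Fin 3, i ≠ j → cs i ≠ cs j := by
        intro i j hij
        fin_cases i <;> fin_cases j <;>
          simp only [hcsdef, Matrix.cons_val_zero, Matrix.cons_val_one, Matrix.head_cons,
            Matrix.cons_val_two, Matrix.tail_cons] <;>
          first
            | exact absurd rfl hij
            | exact h12 | exact h13 | exact h23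
            | exact h12.symm | exact h13.symm | exact h23.symm
      refine core hG hfree hk2 hS (fun i => Subtype.val '' (cs i).supp) ?_ ?_ ?_ ?_ ?_
      · rintro i w ⟨z, _, rfl⟩; exact z.2
      · intro i
        obtain ⟨x, hx⟩ := (cs i).exists_rep
        exact ⟨x.1, ⟨x, by rwa [ConnectedComponent.mem_supp_iff], rfl⟩⟩
      · intro i; exact comp_supp_connected (cs i)
      · intro i j hij
        rw [Set.disjoint_left]
        rintro w ⟨z, hz, rfl⟩ ⟨z', hz', hzz⟩
        have hzeq : z' = z := Subtype.ext hzz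
        rw [ConnectedComponent.mem_supp_iff] at hz hz'
        exact hcs i j hij (by rw [← hz, ← hz', hzeq])
      · rintro i j hij u ⟨z, hz, rfl⟩ v ⟨z', hz', rfl⟩ hadj
        have hFadj : (G.induce (parentSet G r k S)).Adj z z' := hadj
        rw [ConnectedComponent.mem_supp_iff] at hz hz'
        exact hcs i j hij (by rw [← hz, ← hz']; exact ConnectedComponent.sound hFadj.reachable)
    · -- (b) diameter at most 3 when connected
      intro hFcon u v
      by_contra hd
      push_neg at hd
      set F := G.induce (parentSet G r k S) with hFdef
      set m := F.dist u v with hm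
      obtain ⟨p, hp⟩ := hFcon.exists_walk_length_eq_dist u v
      have hm4 : 4 ≤ m := by omega
      have hpm : p.length = m := by omega
      have hle : ∀ i j, i ≤ j → F.dist (p.getVert i) (p.getVert j) ≤ j - i :=
        fun i j h => dist_getVert_le_s3 hFcon p i j h
      have heq : ∀ i j, i ≤ j → j ≤ m → F.dist (p.getVert i) (p.getVert j) = j - i := by
        intro i j hij hjm
        refine le_antisymm (hle i j hij) ?_
        have h1 : F.dist u (p.getVert i) ≤ i := by
          have := hle 0 i (Nat.zero_le _)
          rw [p.getVert_zero] at this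
          simpa using this
        have h2 : F.dist (p.getVert j) v ≤ m - j := by
          have := hle j m hjm
          rwa [show p.getVert m = v from by rw [← hpm, p.getVert_length]] at this
        have t1 := hFcon.dist_triangle (u := u) (v := p.getVert i) (w := v)
        have t2 := hFcon.dist_triangle (u := p.getVert i) (v := p.getVert j) (w := v)
        omega
      have hkey : ∀ i j : ℕ, i ≤ j → j ≤ m → i + 2 ≤ j →
          ¬ G.Adj ↑(p.getVert i) ↑(p.getVert j) ∧ ((p.getVert i : V) ≠ ↑(p.getVert j)) := by
        intro i j hij hjm hgap
        have hdist : F.dist (p.getVert i) (p.getVert j) = j - i := heq i j hij hjm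
        constructor
        · intro hadj
          have hFadj : F.Adj (p.getVert i) (p.getVert j) := hadj
          have : F.dist (p.getVert i) (p.getVert j) ≤ 1 :=
            (SimpleGraph.dist_le hFadj.toWalk).trans (by simp)
          omega
        · intro hEq
          have hvv : p.getVert i = p.getVert j := Subtype.ext hEq
          rw [hvv, SimpleGraph.dist_self] at hdist
          omega
      have hkey' : ∀ i j : ℕ, i ≤ m → j ≤ m → (i + 2 ≤ j ∨ j + 2 ≤ i) →
          ¬ G.Adj ↑(p.getVert i) ↑(p.getVert j) ∧ ((p.getVert i : V) ≠ ↑(p.getVert j)) := by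
        intro i j him hjm h
        rcases h with h | h
        · exact hkey i j (by omega) hjm h
        · obtain ⟨h1, h2⟩ := hkey j i (by omega) him h
          exact ⟨fun hadj => h1 hadj.symm, fun he => h2 he.symm⟩
      set I : Fin 3 → Set ℕ := ![{0}, {2}, Set.Icc 4 m] with hIdef
      set A : Fin 3 → Set V :=
        fun t => {w : V | ∃ i ∈ I t, w = ↑(p.getVert i)} with hAdef
      have hidx : ∀ s t : Fin 3, s ≠ t → ∀ i ∈ I s, ∀ j ∈ I t,
          (i + 2 ≤ j ∨ j + 2 ≤ i) ∧ i ≤ m ∧ j ≤ m := by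
        intro s t hst i hi j hj
        fin_cases s <;> fin_cases t <;>
          first
            | exact absurd rfl hst
            | (simp only [hIdef] at hi hj; simp [Set.mem_Icc] at hi hj; omega)
      refine core hG hfree hk2 hS A ?_ ?_ ?_ ?_ ?_
      · rintro t w ⟨i, -, rfl⟩; exact (p.getVert i).2
      · intro t
        have : ∃ i, i ∈ I t := by
          fin_cases t
          · exact ⟨0, rfl⟩
          · exact ⟨2, rfl⟩
          · exact ⟨4, Set.mem_Icc.mpr ⟨le_rfl, hm4⟩⟩
        obtain ⟨i, hi⟩ := this
        exact ⟨↑(p.getVert i), i, hi, rfl⟩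
      · intro t
        fin_cases t
        · show (G.induce (A 0)).Connected
          have hA0 : A 0 = {(↑(p.getVert 0) : V)} := by
            ext w; simp [hAdef, hIdef]
          rw [hA0]; exact connected_induce_singleton G _
        · show (G.induce (A 1)).Connected
          have hA1 : A 1 = {(↑(p.getVert 2) : V)} := by
            ext w; simp [hAdef, hIdef]
          rw [hA1]; exact connected_induce_singleton G _
        · show (G.induce (A 2)).Connected
          have hI : I 2 = Set.Icc 4 m := by simp [hIdef]
          have hmem : ∀ i, 4 ≤ i → i ≤ m → (↑(p.getVert i) : V) ∈ A 2 := by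
            intro i h4 him
            exact ⟨i, by rw [hI]; exact Set.mem_Icc.mpr ⟨h4, him⟩, rfl⟩
          have claim : ∀ j (hj4 : 4 ≤ j) (hjm : j ≤ m),
              (G.induce (A 2)).Reachable ⟨↑(p.getVert 4), hmem 4 le_rfl hm4⟩
                ⟨↑(p.getVert j), hmem j hj4 hjm⟩ := by
            intro j hj
            induction j, hj using Nat.le_induction with
            | base => intro _; exact Reachable.refl _
            | succ j hj ih =>
              intro hjm
              have hstep : F.Adj (p.getVert j) (p.getVert (j + 1)) :=
                p.adj_getVert_succ (by omega)
              have hGadj : (G.induce (A 2)).Adj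
                  ⟨↑(p.getVert j), hmem j hj (by omega)⟩
                  ⟨↑(p.getVert (j + 1)), hmem (j + 1) (by omega) hjm⟩ := hstep
              exact (ih (by omega)).trans hGadj.reachable
          haveI : Nonempty ↥(A 2) := ⟨⟨↑(p.getVert 4), hmem 4 le_rfl hm4⟩⟩
          refine ⟨fun a b => ?_⟩
          rcases a with ⟨a, ha⟩; rcases b with ⟨b, hb⟩
          obtain ⟨i, hi, rfl⟩ := ha
          obtain ⟨j, hj, rfl⟩ := hb
          rw [hI, Set.mem_Icc] at hi hj
          exact (claim i hi.1 hi.2).symm.trans (claim j hj.1 hj.2)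
      · intro s t hst
        rw [Set.disjoint_left]
        rintro w ⟨i, hi, rfl⟩ ⟨j, hj, hEq⟩
        obtain ⟨hgap, him, hjm⟩ := hidx s t hst i hi j hj
        exact (hkey' i j him hjm hgap).2 hEq
      · rintro s t hst u' ⟨i, hi, rfl⟩ v' ⟨j, hj, rfl⟩ hadj
        obtain ⟨hgap, him, hjm⟩ := hidx s t hst i hi j hj
        exact (hkey' i j him hjm hgap).1 hadj
    · -- (c) two components implies cliques
      intro C₁ C₂ hsp
      obtain ⟨hun, hdis, hne1, hne2, hc1, hc2, hcross⟩ := hsp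
      have main : ∀ (C D : Set V), C ∪ D = parentSet G r k S → Disjoint C D →
          D.Nonempty → (G.induce D).Connected →
          (∀ x ∈ C, ∀ y ∈ D, ¬ G.Adj x y) → G.IsClique C := by
        intro C D hCD hdisj hDne hDcon hcr
        intro a ha b hb hab
        by_contra hnadj
        have hCP : C ⊆ parentSet G r k S := hCD ▸ Set.subset_union_left
        have hDP : D ⊆ parentSet G r k S := hCD ▸ Set.subset_union_right
        refine core hG hfree hk2 hS ![{a}, {b}, D] ?_ ?_ ?_ ?_ ?_
        · intro i
          fin_cases i
          · exact fun w hw => Set.mem_singleton_iff.mp hw ▸ hCP ha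
          · exact fun w hw => Set.mem_singleton_iff.mp hw ▸ hCP hb
          · exact hDP
        · intro i
          fin_cases i
          · exact ⟨a, rfl⟩
          · exact ⟨b, rfl⟩
          · exact hDne
        · intro i
          fin_cases i
          · exact connected_induce_singleton G a
          · exact connected_induce_singleton G b
          · exact hDcon
        · intro i j hij
          have dab : Disjoint ({a} : Set V) ({b} : Set V) := by
            rw [Set.disjoint_singleton]; exact hab
          have daD : Disjoint ({a} : Set V) D :=
            Set.disjoint_singleton_left.mpr (Set.disjoint_left.mp hdisj ha)
          have dbD : Disjoint ({b} : Set V) D :=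
            Set.disjoint_singleton_left.mpr (Set.disjoint_left.mp hdisj hb)
          fin_cases i <;> fin_cases j <;>
            first
              | exact absurd rfl hij
              | exact dab | exact dab.symm
              | exact daD | exact daD.symm
              | exact dbD | exact dbD.symm
        · intro i j hij
          have nab : ∀ x ∈ ({a} : Set V), ∀ y ∈ ({b} : Set V), ¬ G.Adj x y := by
            rintro x rfl y rfl; exact hnadj
          have naD : ∀ x ∈ ({a} : Set V), ∀ y ∈ D, ¬ G.Adj x y := by
            rintro x rfl y hy; exact hcr _ ha y hy
          have nbD : ∀ x ∈ ({b} : Set V), ∀ y ∈ D, ¬ G.Adj x y := by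
            rintro x rfl y hy; exact hcr _ hb y hy
          have nsym : ∀ (X Y : Set V), (∀ x ∈ X, ∀ y ∈ Y, ¬ G.Adj x y) →
              ∀ y ∈ Y, ∀ x ∈ X, ¬ G.Adj y x :=
            fun X Y h y hy x hx hadj => h x hx y hy hadj.symm
          fin_cases i <;> fin_cases j <;>
            first
              | exact absurd rfl hij
              | exact nab | exact nsym _ _ nab
              | exact naD | exact nsym _ _ naD
              | exact nbD | exact nsym _ _ nbD
      exact ⟨main C₁ C₂ hun hdis hne2 hc2 hcross,
        main C₂ C₁ (by rw [Set.union_comm]; exact hun) hdis.symm hne1 hc1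
          (fun x hx y hy hadj => hcross y hy x hx hadj.symm)⟩

end Paper
end

section
/- Let G be a universally signable graph (i.e., a graph containing no theta, pyramid, prism, or wheel as an induced subgraph), let C be an induced cycle of G of length greater than three, and let u, v be two non-adjacent vertices of C. Then every induced path between u and v in G has all its vertices contained in V(C). -/
open SimpleGraph

namespace Paper

variable {V : Type}

/-!
If an induced path between two vertices of a hole `C` leaves `C`, it contains a bridge: an
induced path `a, r, …, s, b` with `a, b ∈ C` non-adjacent and `r, …, s` outside `C`. Take a
shortest bridge. Since `G` has no wheel, a vertex outside `C` has at most two neighbours on `C`,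
and since `G` has no theta, two such neighbours are adjacent. If some `d ∈ C` is adjacent to an
inner vertex of the bridge other than `r` and `s`, minimality forces `d` to be adjacent to `a` and
`b` (a segment of the bridge between the neighbourhoods of two non-adjacent vertices of `C` spans
a bridge), and `d` is the centre of a wheel whose rim is the bridge closed up by the arc of `C`
avoiding `d`. Otherwise `C` sees only `r`, through `a` and possibly a neighbour `a'` of `a`, and
`s`, through `b` and possibly a neighbour `b'` of `b`; the hole and the bridge then contain a
theta, a pyramid, a prism or a wheel, according to which of `a'`, `b'` exist and whether they
coincide.
-/

section Walks

variable {G : SimpleGraph V}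

lemma isInducedPath_iff {u v : V} {p : G.Walk u v} :
    IsInducedPath G p ↔
      p.IsPath ∧ ∀ x ∈ p.support, ∀ y ∈ p.support, G.Adj x y → s(x, y) ∈ p.edges :=
  and_congr_right fun _ => forall₂_congr fun _ _ => forall₂_congr fun _ _ =>
    ⟨Iff.mp, fun h => ⟨h, p.adj_of_mem_edges⟩⟩

lemma isInducedPath_cons_iff {u v w : V} (h : G.Adj u v) (p : G.Walk v w) :
    IsInducedPath G (Walk.cons h p) ↔
      IsInducedPath G p ∧ u ∉ p.support ∧ ∀ z ∈ p.support, G.Adj u z → z = v := by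
  simp only [isInducedPath_iff, Walk.cons_isPath_iff, Walk.support_cons, Walk.edges_cons,
    List.mem_cons, forall_eq_or_imp]
  constructor
  · rintro ⟨⟨hp, hu⟩, ⟨-, hu'⟩, hrest⟩
    refine ⟨⟨hp, fun x hx y hy hxy => ?_⟩, hu, fun z hz huz => ?_⟩
    · rcases (hrest x hx).2 y hy hxy with h' | h'
      · rcases Sym2.eq_iff.1 h' with ⟨rfl, -⟩ | ⟨-, rfl⟩ <;> contradiction
      · exact h'
    · rcases hu' z hz huz with h' | h'
      · exact (Sym2.congr_right.1 h')
      · exact absurd (p.fst_mem_support_of_mem_edges h') hu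
  · rintro ⟨⟨hp, hind⟩, hu, hnb⟩
    have hu' : ∀ z ∈ p.support, G.Adj u z → s(u, z) = s(u, v) ∨ s(u, z) ∈ p.edges :=
      fun z hz huz => Or.inl (by rw [hnb z hz huz])
    refine ⟨⟨hp, hu⟩, ⟨fun h => absurd h G.irrefl, hu'⟩, fun x hx => ⟨?_, ?_⟩⟩
    · intro hxu
      rcases hu' x hx hxu.symm with h' | h'
      · exact Or.inl (Sym2.eq_swap.trans h')
      · exact Or.inr (Sym2.eq_swap ▸ h')
    · exact fun y hy hxy => Or.inr (hind x hx y hy hxy)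

lemma IsInducedPath.reverse {u v : V} {p : G.Walk u v} (h : IsInducedPath G p) :
    IsInducedPath G p.reverse := by
  refine ⟨h.1.reverse, fun x hx y hy => ?_⟩
  simp only [Walk.support_reverse, List.mem_reverse, Walk.edges_reverse] at hx hy ⊢
  exact h.2 x hx y hy

@[simp] lemma isInducedPath_reverse_iff {u v : V} {p : G.Walk u v} :
    IsInducedPath G p.reverse ↔ IsInducedPath G p :=
  ⟨fun h => by simpa using h.reverse, IsInducedPath.reverse⟩

lemma isInducedPath_concat_iff {u v w : V} (p : G.Walk u v) (h : G.Adj v w) :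
    IsInducedPath G (p.concat h) ↔
      IsInducedPath G p ∧ w ∉ p.support ∧ ∀ z ∈ p.support, G.Adj w z → z = v := by
  rw [← isInducedPath_reverse_iff, Walk.reverse_concat, isInducedPath_cons_iff]
  simp

lemma IsInducedPath.of_append_right {u v w : V} {p : G.Walk u v} {q : G.Walk v w}
    (h : IsInducedPath G (p.append q)) : IsInducedPath G q := by
  induction p with
  | nil => exact h
  | cons h' p ih => exact ih ((isInducedPath_cons_iff h' _).1 h).1

lemma IsInducedPath.of_append_left {u v w : V} {p : G.Walk u v} {q : G.Walk v w}
    (h : IsInducedPath G (p.append q)) : IsInducedPath G p := by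
  have := (Walk.reverse_append p q ▸ h.reverse).of_append_right
  simpa using this.reverse

lemma mem_support_of_length_eq_zero {u v z : V} {p : G.Walk u v} (h : p.length = 0)
    (hz : z ∈ p.support) : z = u := by
  cases p with
  | nil => simpa using hz
  | cons => simp at h

lemma two_le_length_of_not_adj {a b : V} (p : G.Walk a b) (hab : a ≠ b) (hnab : ¬ G.Adj a b) :
    2 ≤ p.length := by
  rcases p with _ | ⟨h, _ | ⟨h', q⟩⟩
  · exact absurd rfl hab
  · exact absurd h hnab
  · simp

lemma mem_support_cons_concat_iff {a b r s x : V} (h₁ : G.Adj a r) (I : G.Walk r s)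
    (h₂ : G.Adj s b) :
    x ∈ (Walk.cons h₁ (I.concat h₂)).support ↔ x = a ∨ x ∈ I.support ∨ x = b := by
  simp [Walk.support_concat]

lemma isInducedPath_cons_concat {a b r s : V} (h₁ : G.Adj a r) {I : G.Walk r s} (h₂ : G.Adj s b)
    (hI : IsInducedPath G I) (haI : a ∉ I.support) (hbI : b ∉ I.support) (hab : a ≠ b)
    (hnab : ¬ G.Adj a b) (ha : ∀ z ∈ I.support, G.Adj a z → z = r)
    (hb : ∀ z ∈ I.support, G.Adj b z → z = s) :
    IsInducedPath G (Walk.cons h₁ (I.concat h₂)) := by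
  refine (isInducedPath_cons_iff _ _).2 ⟨(isInducedPath_concat_iff _ _).2 ⟨hI, hbI, hb⟩, ?_, ?_⟩
  · simpa [hab] using haI
  · simp only [Walk.support_concat, List.mem_append, List.mem_singleton]
    rintro z (hz | rfl) haz
    exacts [ha z hz haz, absurd haz hnab]

end Walks

section Decomposition

variable {G : SimpleGraph V}

lemma _root_.SimpleGraph.Walk.exists_eq_append_cons_boundary {u w : V} (p : G.Walk u w)
    (P : V → Prop) (hu : ¬ P u) (hP : ∃ z ∈ p.support, P z) :
    ∃ (x y : V) (h : G.Adj x y) (p₁ : G.Walk u x) (p₂ : G.Walk y w),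
      p = p₁.append (Walk.cons h p₂) ∧ (∀ z ∈ p₁.support, ¬ P z) ∧ P y := by
  induction p with
  | nil => obtain ⟨z, hz, hPz⟩ := hP; simp_all
  | @cons u u' w h p ih =>
    by_cases hu' : P u'
    · exact ⟨u, u', h, .nil, p, rfl, by simpa using hu, hu'⟩
    · obtain ⟨z, hz, hPz⟩ := hP
      have hz' : z ∈ p.support := by
        rcases List.mem_cons.1 (Walk.support_cons h p ▸ hz) with rfl | hz
        · exact absurd hPz hu
        · exact hz
      obtain ⟨x, y, h', p₁, p₂, rfl, hp₁, hy⟩ := ih hu' ⟨z, hz', hPz⟩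
      exact ⟨x, y, h', .cons h p₁, p₂, rfl, by simpa [hu] using hp₁, hy⟩

lemma _root_.SimpleGraph.Walk.exists_segment_of_start {u w : V} (p : G.Walk u w)
    (P Q : V → Prop) (hQu : ¬ Q u) (hP : ∀ z ∈ p.support, P z → z = u) (hQ : ∃ y ∈ p.support, Q y) :
    ∃ (y : V) (m : G.Walk u y) (p₂ : G.Walk y w), p = m.append p₂ ∧ Q y ∧
      ∀ z ∈ m.support, P z ∨ Q z → z = u ∨ z = y := by
  obtain ⟨x, y, h, m, p₂, rfl, hm, hy⟩ := p.exists_eq_append_cons_boundary Q hQu hQ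
  refine ⟨y, m.concat h, p₂, by
    rw [Walk.concat_eq_append, ← Walk.append_assoc, Walk.cons_append, Walk.nil_append], hy,
    fun z hz hz' => ?_⟩
  simp only [Walk.support_concat, List.mem_append, List.mem_singleton] at hz
  rcases hz with hz | rfl
  · exact Or.inl (hP z (Walk.support_subset_support_append_left _ _ hz)
      (hz'.resolve_right (hm z hz)))
  · exact Or.inr rfl

lemma _root_.SimpleGraph.Walk.exists_segment {u w : V} (p : G.Walk u w) (P Q : V → Prop)
    (hPQ : ∀ z ∈ p.support, ¬ (P z ∧ Q z))
    (hP : ∃ x ∈ p.support, P x) (hQ : ∃ y ∈ p.support, Q y) :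
    ∃ (x y : V) (p₁ : G.Walk u x) (m : G.Walk x y) (p₂ : G.Walk y w),
      p = p₁.append (m.append p₂) ∧ ((P x ∧ Q y) ∨ (Q x ∧ P y)) ∧
      ∀ z ∈ m.support, P z ∨ Q z → z = x ∨ z = y := by
  induction p with
  | nil => obtain ⟨x, hx, hPx⟩ := hP; obtain ⟨y, hy, hQy⟩ := hQ; simp_all
  | @cons u u' w h p ih =>
    by_cases hboth : (∃ x ∈ p.support, P x) ∧ (∃ y ∈ p.support, Q y)
    · obtain ⟨x, y, p₁, m, p₂, rfl, hxy, hm⟩ :=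
        ih (fun z hz => hPQ z (by simp [hz])) hboth.1 hboth.2
      exact ⟨x, y, .cons h p₁, m, p₂, rfl, hxy, hm⟩
    have hmem : ∀ {R : V → Prop}, (∃ x ∈ (Walk.cons h p).support, R x) →
        ¬ (∃ x ∈ p.support, R x) → R u ∧ ∀ z ∈ (Walk.cons h p).support, R z → z = u := by
      intro R ⟨x, hx, hRx⟩ hnR
      have hR : ∀ z ∈ (Walk.cons h p).support, R z → z = u := by
        intro z hz hRz
        rw [Walk.support_cons, List.mem_cons] at hz
        exact hz.resolve_right fun hz => hnR ⟨z, hz, hRz⟩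
      exact ⟨hR x hx hRx ▸ hRx, hR⟩
    rcases not_and_or.1 hboth with hnP | hnQ
    · obtain ⟨hPu, hPonly⟩ := hmem hP hnP
      obtain ⟨y, m, p₂, heq, hy, hm⟩ :=
        Walk.exists_segment_of_start _ P Q (fun hQu => hPQ u (by simp) ⟨hPu, hQu⟩) hPonly hQ
      exact ⟨u, y, .nil, m, p₂, heq, Or.inl ⟨hPu, hy⟩, hm⟩
    · obtain ⟨hQu, hQonly⟩ := hmem hQ hnQ
      obtain ⟨y, m, p₂, heq, hy, hm⟩ :=
        Walk.exists_segment_of_start _ Q P (fun hPu => hPQ u (by simp) ⟨hPu, hQu⟩) hQonly hP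
      exact ⟨u, y, .nil, m, p₂, heq, Or.inr ⟨hQu, hy⟩, fun z hz h' => hm z hz h'.symm⟩

lemma _root_.SimpleGraph.Walk.exists_eq_append_cons_of_mem_edges {u w : V} (p : G.Walk u w)
    {e : Sym2 V} (he : e ∈ p.edges) :
    ∃ (x y : V) (h : G.Adj x y) (p₁ : G.Walk u x) (p₂ : G.Walk y w),
      e = s(x, y) ∧ p = p₁.append (Walk.cons h p₂) := by
  induction p with
  | nil => simp at he
  | cons h p ih =>
    rw [Walk.edges_cons, List.mem_cons] at he
    rcases he with rfl | he
    · exact ⟨_, _, h, .nil, p, rfl, rfl⟩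
    · obtain ⟨x, y, h', p₁, p₂, rfl, rfl⟩ := ih he
      exact ⟨x, y, h', .cons h p₁, p₂, rfl, rfl⟩

lemma _root_.SimpleGraph.Walk.IsCycle.exists_arcs {v x y : V} {c : G.Walk v v} (hc : c.IsCycle)
    (hx : x ∈ c.support) (hy : y ∈ c.support) (hxy : x ≠ y) :
    ∃ P₁ P₂ : G.Walk x y, P₁.IsPath ∧ P₂.IsPath ∧
      (∀ z ∈ P₁.support, z ∈ P₂.support → z = x ∨ z = y) ∧
      (∀ z, z ∈ c.support ↔ z ∈ P₁.support ∨ z ∈ P₂.support) ∧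
      (∀ e, e ∈ c.edges ↔ e ∈ P₁.edges ∨ e ∈ P₂.edges) := by
  classical
  have hc' : (c.rotate x hx).IsCycle := hc.rotate hx
  have hy' : y ∈ (c.rotate x hx).support := (c.mem_support_rotate_iff x hx).2 hy
  have hspec := (c.rotate x hx).take_spec hy'
  set T := (c.rotate x hx).takeUntil y hy'
  set D := (c.rotate x hx).dropUntil y hy'
  have hD : D.IsPath := (hspec ▸ hc').isPath_of_append_right (Walk.not_nil_of_ne hxy)
  refine ⟨T, D.reverse, hc'.isPath_takeUntil hy', hD.reverse, fun z hzT hzD => ?_, fun z => ?_,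
    fun e => ?_⟩
  · have hnodup := hc'.support_nodup
    rw [← hspec, Walk.tail_support_append] at hnodup
    rw [Walk.support_reverse, List.mem_reverse] at hzD
    by_contra! hz
    exact List.disjoint_of_nodup_append hnodup
      ((Walk.mem_support_iff _).1 hzT |>.resolve_left hz.1)
      ((Walk.mem_support_iff _).1 hzD |>.resolve_left hz.2)
  · rw [← c.mem_support_rotate_iff x hx, ← hspec, Walk.mem_support_append_iff,
      Walk.support_reverse, List.mem_reverse]
  · rw [← (c.rotate_edges x hx).mem_iff, ← hspec, Walk.edges_append, List.mem_append,
      Walk.edges_reverse, List.mem_reverse]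

lemma mem_edges_left_of_mem_edges_append {u v w x y : V} {p : G.Walk u v} {q : G.Walk v w}
    (h : (p.append q).IsPath) (hx : x ∈ p.support) (hy : y ∈ p.support) (hxy : G.Adj x y)
    (he : s(x, y) ∈ (p.append q).edges) : s(x, y) ∈ p.edges := by
  rw [Walk.edges_append, List.mem_append] at he
  refine he.resolve_right fun he => hxy.ne ?_
  have hxv := not_ne_iff.1 fun hne => h.ne_of_mem_support_of_append hne hx
    (q.fst_mem_support_of_mem_edges he) rfl
  have hyv := not_ne_iff.1 fun hne => h.ne_of_mem_support_of_append hne hy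
    (q.snd_mem_support_of_mem_edges he) rfl
  rw [hxv, hyv]

lemma mem_edges_right_of_mem_edges_append {u v w x y : V} {p : G.Walk u v} {q : G.Walk v w}
    (h : (p.append q).IsPath) (hx : x ∈ q.support) (hy : y ∈ q.support) (hxy : G.Adj x y)
    (he : s(x, y) ∈ (p.append q).edges) : s(x, y) ∈ q.edges := by
  rw [← Walk.reverse_reverse (p.append q), Walk.reverse_append, Walk.edges_reverse,
    List.mem_reverse] at he
  have h' : (q.reverse.append p.reverse).IsPath := by
    rw [← Walk.reverse_append]; exact h.reverse
  have := mem_edges_left_of_mem_edges_append h' (by simpa using hx) (by simpa using hy) hxy he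
  simpa using this

def IsInducedExceptEnds {a a' : V} (Q : G.Walk a a') : Prop :=
  Q.IsPath ∧ ∀ x ∈ Q.support, ∀ y ∈ Q.support, G.Adj x y → s(x, y) = s(a, a') ∨ s(x, y) ∈ Q.edges

namespace IsInducedExceptEnds

variable {a a' b : V} {T : G.Walk a b} {S : G.Walk b a'}

lemma isInducedPath_left (hQ : IsInducedExceptEnds (T.append S)) (ha' : a' ∉ T.support) :
    IsInducedPath G T := by
  refine ⟨hQ.1.of_append_left, fun x hx y hy => ⟨fun hxy => ?_, T.adj_of_mem_edges⟩⟩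
  rcases hQ.2 x (by simp [hx]) y (by simp [hy]) hxy with h | h
  · rcases Sym2.eq_iff.1 h with ⟨-, rfl⟩ | ⟨rfl, -⟩ <;> contradiction
  · exact mem_edges_left_of_mem_edges_append hQ.1 hx hy hxy h

lemma isInducedPath_right (hQ : IsInducedExceptEnds (T.append S)) (ha : a ∉ S.support) :
    IsInducedPath G S := by
  refine ⟨hQ.1.of_append_right, fun x hx y hy => ⟨fun hxy => ?_, S.adj_of_mem_edges⟩⟩
  rcases hQ.2 x (by simp [hx]) y (by simp [hy]) hxy with h | h
  · rcases Sym2.eq_iff.1 h with ⟨rfl, -⟩ | ⟨-, rfl⟩ <;> contradiction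
  · exact mem_edges_right_of_mem_edges_append hQ.1 hx hy hxy h

lemma eq_of_mem_of_mem (hQ : IsInducedExceptEnds (T.append S)) {x : V} (hx : x ∈ T.support)
    (hx' : x ∈ S.support) : x = b :=
  not_ne_iff.1 fun h => hQ.1.ne_of_mem_support_of_append h hx hx' rfl

lemma touch (hQ : IsInducedExceptEnds (T.append S)) {x y : V} (hx : x ∈ T.support)
    (hy : y ∈ S.support) (hxy : x = y ∨ G.Adj x y) : x = b ∨ y = b ∨ (x = a ∧ y = a') := by
  rcases hxy with rfl | hxy
  · exact .inl (hQ.eq_of_mem_of_mem hx hy)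
  rcases hQ.2 x (by simp [hx]) y (by simp [hy]) hxy with h | h
  · rcases Sym2.eq_iff.1 h with ⟨rfl, rfl⟩ | ⟨rfl, -⟩
    exacts [.inr (.inr ⟨rfl, rfl⟩), .inl (hQ.eq_of_mem_of_mem hx S.end_mem_support)]
  rw [Walk.edges_append, List.mem_append] at h
  rcases h with h | h
  · exact .inr (.inl (hQ.eq_of_mem_of_mem (T.snd_mem_support_of_mem_edges h) hy))
  · exact .inl (hQ.eq_of_mem_of_mem hx (S.fst_mem_support_of_mem_edges h))

end IsInducedExceptEnds

end Decomposition

section InducedSubgraphs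

variable {G : SimpleGraph V}

lemma adj_iff_of_isInducedPath₃ {a₁ a₂ a₃ b₁ b₂ b₃ : V} {p₁ : G.Walk a₁ b₁}
    {p₂ : G.Walk a₂ b₂} {p₃ : G.Walk a₃ b₃} (h₁ : IsInducedPath G p₁) (h₂ : IsInducedPath G p₂)
    (h₃ : IsInducedPath G p₃) {E : List (Sym2 V)} (hE : ∀ e ∈ E, e ∈ G.edgeSet)
    (h₁₂ : ∀ x ∈ p₁.support, ∀ y ∈ p₂.support, G.Adj x y →
      s(x, y) ∈ p₁.edges ∨ s(x, y) ∈ p₂.edges ∨ s(x, y) ∈ E)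
    (h₁₃ : ∀ x ∈ p₁.support, ∀ y ∈ p₃.support, G.Adj x y →
      s(x, y) ∈ p₁.edges ∨ s(x, y) ∈ p₃.edges ∨ s(x, y) ∈ E)
    (h₂₃ : ∀ x ∈ p₂.support, ∀ y ∈ p₃.support, G.Adj x y →
      s(x, y) ∈ p₂.edges ∨ s(x, y) ∈ p₃.edges ∨ s(x, y) ∈ E) :
    ∀ u v, u ∈ p₁.support ++ p₂.support ++ p₃.support →
      v ∈ p₁.support ++ p₂.support ++ p₃.support →
      (G.Adj u v ↔ s(u, v) ∈ p₁.edges ++ p₂.edges ++ p₃.edges ∨ s(u, v) ∈ E) := by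
  intro u v hu hv
  simp only [List.mem_append] at hu hv ⊢
  refine ⟨fun huv => ?_, fun he => ?_⟩
  · rcases hu with (hu | hu) | hu <;> rcases hv with (hv | hv) | hv
    all_goals first
      | have := (h₁.2 u hu v hv).1 huv; tauto
      | have := (h₂.2 u hu v hv).1 huv; tauto
      | have := (h₃.2 u hu v hv).1 huv; tauto
      | have := h₁₂ u hu v hv huv; tauto
      | have := h₁₃ u hu v hv huv; tauto
      | have := h₂₃ u hu v hv huv; tauto
      | have := h₁₂ v hv u hu huv.symm; rw [Sym2.eq_swap] at this; tauto
      | have := h₁₃ v hv u hu huv.symm; rw [Sym2.eq_swap] at this; tauto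
      | have := h₂₃ v hv u hu huv.symm; rw [Sym2.eq_swap] at this; tauto
  · rcases he with ((he | he) | he) | he
    exacts [p₁.adj_of_mem_edges he, p₂.adj_of_mem_edges he, p₃.adj_of_mem_edges he, hE _ he]

lemma mem_edges_of_adj_of_meet {a b : V} {p q : G.Walk a b} (hp : IsInducedPath G p)
    (hq : IsInducedPath G q)
    (hpq : ∀ x ∈ p.support, ∀ y ∈ q.support, (x = y ∨ G.Adj x y) → x = a ∨ x = b ∨ y = a ∨ y = b)
    {x y : V} (hx : x ∈ p.support) (hy : y ∈ q.support) (hxy : G.Adj x y) :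
    s(x, y) ∈ p.edges ∨ s(x, y) ∈ q.edges := by
  rcases hpq x hx y hy (Or.inr hxy) with rfl | rfl | rfl | rfl
  · exact Or.inr ((hq.2 _ q.start_mem_support _ hy).1 hxy)
  · exact Or.inr ((hq.2 _ q.end_mem_support _ hy).1 hxy)
  · exact Or.inl ((hp.2 _ hx _ p.start_mem_support).1 hxy)
  · exact Or.inl ((hp.2 _ hx _ p.end_mem_support).1 hxy)

lemma hasTheta_of_isInducedPath {a b : V} {p₁ p₂ p₃ : G.Walk a b}
    (h₁ : IsInducedPath G p₁) (h₂ : IsInducedPath G p₂) (h₃ : IsInducedPath G p₃)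
    (hl₁ : 2 ≤ p₁.length) (hl₂ : 2 ≤ p₂.length) (hl₃ : 2 ≤ p₃.length)
    (h₁₂ : ∀ x ∈ p₁.support, ∀ y ∈ p₂.support, (x = y ∨ G.Adj x y) →
      x = a ∨ x = b ∨ y = a ∨ y = b)
    (h₁₃ : ∀ x ∈ p₁.support, ∀ y ∈ p₃.support, (x = y ∨ G.Adj x y) →
      x = a ∨ x = b ∨ y = a ∨ y = b)
    (h₂₃ : ∀ x ∈ p₂.support, ∀ y ∈ p₃.support, (x = y ∨ G.Adj x y) →
      x = a ∨ x = b ∨ y = a ∨ y = b) :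
    HasTheta G := by
  have meet : ∀ {p q : G.Walk a b}, (∀ x ∈ p.support, ∀ y ∈ q.support, (x = y ∨ G.Adj x y) →
      x = a ∨ x = b ∨ y = a ∨ y = b) → ∀ x, x ∈ p.support → x ∈ q.support → x = a ∨ x = b :=
    fun hpq x hx hx' => by have := hpq x hx x hx' (Or.inl rfl); tauto
  have cross : ∀ {p q : G.Walk a b}, IsInducedPath G p → IsInducedPath G q →
      (∀ x ∈ p.support, ∀ y ∈ q.support, (x = y ∨ G.Adj x y) → x = a ∨ x = b ∨ y = a ∨ y = b) →
      ∀ x ∈ p.support, ∀ y ∈ q.support, G.Adj x y →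
        s(x, y) ∈ p.edges ∨ s(x, y) ∈ q.edges ∨ s(x, y) ∈ ([] : List (Sym2 V)) :=
    fun hp hq hpq x hx y hy hxy => (mem_edges_of_adj_of_meet hp hq hpq hx hy hxy).imp_right .inl
  refine ⟨a, b, p₁, p₂, p₃, h₁.1, h₂.1, h₃.1, hl₁, hl₂, hl₃, meet h₁₂, meet h₁₃, meet h₂₃,
    fun u v hu hv => ?_⟩
  simpa using adj_iff_of_isInducedPath₃ h₁ h₂ h₃ (by simp) (cross h₁ h₂ h₁₂) (cross h₁ h₃ h₁₃)
    (cross h₂ h₃ h₂₃) u v hu hv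

lemma isInducedCycle_append {a b : V} {p q : G.Walk a b} (hp : IsInducedPath G p)
    (hq : IsInducedPath G q)
    (hpq : ∀ x ∈ p.support, ∀ y ∈ q.support, (x = y ∨ G.Adj x y) → x = a ∨ x = b ∨ y = a ∨ y = b)
    (hl : 2 ≤ q.length) :
    IsInducedCycle G (p.append q.reverse) := by
  refine ⟨hp.1.isCycle_append hq.1.reverse ?_ (Or.inr (by rw [Walk.length_reverse]; omega)),
    fun x hx y hy => ?_⟩
  · intro z hz hz'
    have hza : z ≠ a := fun h =>
      (List.nodup_cons.1 (p.cons_tail_support ▸ hp.1.support_nodup)).1 (h ▸ hz)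
    have hzb : z ≠ b := fun h =>
      (List.nodup_cons.1 (q.reverse.cons_tail_support ▸ hq.1.reverse.support_nodup)).1 (h ▸ hz')
    have := hpq z (List.mem_of_mem_tail hz) z (by simpa using List.mem_of_mem_tail hz')
      (Or.inl rfl)
    tauto
  · simp only [Walk.mem_support_append_iff, Walk.support_reverse, List.mem_reverse] at hx hy
    simp only [Walk.edges_append, Walk.edges_reverse, List.mem_append, List.mem_reverse]
    refine ⟨fun hxy => ?_, fun he => he.elim p.adj_of_mem_edges q.adj_of_mem_edges⟩
    rcases hx with hx | hx <;> rcases hy with hy | hy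
    · exact Or.inl ((hp.2 x hx y hy).1 hxy)
    · exact mem_edges_of_adj_of_meet hp hq hpq hx hy hxy
    · rw [Sym2.eq_swap]; exact mem_edges_of_adj_of_meet hp hq hpq hy hx hxy.symm
    · exact Or.inr ((hq.2 x hx y hy).1 hxy)

lemma hasPyramid_of_isInducedPath {a b₁ b₂ b₃ : V} {p₁ : G.Walk a b₁} {p₂ : G.Walk a b₂}
    {p₃ : G.Walk a b₃} (h₁ : IsInducedPath G p₁) (h₂ : IsInducedPath G p₂)
    (h₃ : IsInducedPath G p₃) (hb₁₂ : G.Adj b₁ b₂) (hb₂₃ : G.Adj b₂ b₃) (hb₁₃ : G.Adj b₁ b₃)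
    (hl₁ : 2 ≤ p₁.length) (hl₂ : 1 ≤ p₂.length) (hl₃ : 2 ≤ p₃.length)
    (h₁₂ : ∀ x ∈ p₁.support, ∀ y ∈ p₂.support, (x = y ∨ G.Adj x y) →
      x = a ∨ y = a ∨ (x = b₁ ∧ y = b₂))
    (h₁₃ : ∀ x ∈ p₁.support, ∀ y ∈ p₃.support, (x = y ∨ G.Adj x y) →
      x = a ∨ y = a ∨ (x = b₁ ∧ y = b₃))
    (h₂₃ : ∀ x ∈ p₂.support, ∀ y ∈ p₃.support, (x = y ∨ G.Adj x y) →
      x = a ∨ y = a ∨ (x = b₂ ∧ y = b₃)) :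
    HasPyramid G := by
  have meet : ∀ {c d : V} {p : G.Walk a c} {q : G.Walk a d}, G.Adj c d →
      (∀ x ∈ p.support, ∀ y ∈ q.support, (x = y ∨ G.Adj x y) → x = a ∨ y = a ∨ (x = c ∧ y = d)) →
      ∀ x, x ∈ p.support → x ∈ q.support → x = a := fun hcd hpq x hx hx' => by
    rcases hpq x hx x hx' (Or.inl rfl) with h | h | ⟨rfl, rfl⟩
    exacts [h, h, absurd rfl hcd.ne]
  have cross : ∀ {c d : V} {p : G.Walk a c} {q : G.Walk a d}, IsInducedPath G p →
      IsInducedPath G q → s(c, d) ∈ [s(b₁, b₂), s(b₂, b₃), s(b₁, b₃)] →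
      (∀ x ∈ p.support, ∀ y ∈ q.support, (x = y ∨ G.Adj x y) → x = a ∨ y = a ∨ (x = c ∧ y = d)) →
      ∀ x ∈ p.support, ∀ y ∈ q.support, G.Adj x y → s(x, y) ∈ p.edges ∨ s(x, y) ∈ q.edges ∨
        s(x, y) ∈ [s(b₁, b₂), s(b₂, b₃), s(b₁, b₃)] := fun hp hq hcd hpq x hx y hy hxy => by
    rcases hpq x hx y hy (Or.inr hxy) with rfl | rfl | ⟨rfl, rfl⟩
    · exact Or.inr (Or.inl ((hq.2 _ (Walk.start_mem_support _) _ hy).1 hxy))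
    · exact Or.inl ((hp.2 _ hx _ (Walk.start_mem_support _)).1 hxy)
    · exact Or.inr (Or.inr hcd)
  refine ⟨a, b₁, b₂, b₃, p₁, p₂, p₃, h₁.1, h₂.1, h₃.1, hb₁₂, hb₂₃, hb₁₃, by omega, hl₂,
    by omega, Or.inr (Or.inl ⟨hl₁, hl₃⟩), meet hb₁₂ h₁₂, meet hb₁₃ h₁₃, meet hb₂₃ h₂₃,
    adj_iff_of_isInducedPath₃ h₁ h₂ h₃ ?_ (cross h₁ h₂ (by simp) h₁₂) (cross h₁ h₃ (by simp) h₁₃)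
      (cross h₂ h₃ (by simp) h₂₃)⟩
  simp [hb₁₂, hb₂₃, hb₁₃]

lemma hasPrism_of_isInducedPath {a₁ a₂ a₃ b₁ b₂ b₃ : V} {p₁ : G.Walk a₁ b₁}
    {p₂ : G.Walk a₂ b₂} {p₃ : G.Walk a₃ b₃} (h₁ : IsInducedPath G p₁)
    (h₂ : IsInducedPath G p₂) (h₃ : IsInducedPath G p₃) (ha₁₂ : G.Adj a₁ a₂)
    (ha₂₃ : G.Adj a₂ a₃) (ha₁₃ : G.Adj a₁ a₃) (hb₁₂ : G.Adj b₁ b₂) (hb₂₃ : G.Adj b₂ b₃)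
    (hb₁₃ : G.Adj b₁ b₃)
    (h₁₂ : ∀ x ∈ p₁.support, ∀ y ∈ p₂.support, (x = y ∨ G.Adj x y) →
      (x = a₁ ∧ y = a₂) ∨ (x = b₁ ∧ y = b₂))
    (h₁₃ : ∀ x ∈ p₁.support, ∀ y ∈ p₃.support, (x = y ∨ G.Adj x y) →
      (x = a₁ ∧ y = a₃) ∨ (x = b₁ ∧ y = b₃))
    (h₂₃ : ∀ x ∈ p₂.support, ∀ y ∈ p₃.support, (x = y ∨ G.Adj x y) →
      (x = a₂ ∧ y = a₃) ∨ (x = b₂ ∧ y = b₃)) :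
    HasPrism G := by
  have disj : ∀ {c d c' d' : V} {p : G.Walk c d} {q : G.Walk c' d'}, G.Adj c c' → G.Adj d d' →
      (∀ x ∈ p.support, ∀ y ∈ q.support, (x = y ∨ G.Adj x y) →
        (x = c ∧ y = c') ∨ (x = d ∧ y = d')) →
      ∀ x, x ∈ p.support → x ∉ q.support := fun hc hd hpq x hx hx' => by
    rcases hpq x hx x hx' (Or.inl rfl) with ⟨rfl, rfl⟩ | ⟨rfl, rfl⟩
    exacts [hc.ne rfl, hd.ne rfl]
  have cross : ∀ {c d c' d' : V} {p : G.Walk c d} {q : G.Walk c' d'},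
      s(c, c') ∈ [s(a₁, a₂), s(a₂, a₃), s(a₁, a₃)] → s(d, d') ∈ [s(b₁, b₂), s(b₂, b₃), s(b₁, b₃)] →
      (∀ x ∈ p.support, ∀ y ∈ q.support, (x = y ∨ G.Adj x y) →
        (x = c ∧ y = c') ∨ (x = d ∧ y = d')) →
      ∀ x ∈ p.support, ∀ y ∈ q.support, G.Adj x y → s(x, y) ∈ p.edges ∨ s(x, y) ∈ q.edges ∨
        s(x, y) ∈ [s(a₁, a₂), s(a₂, a₃), s(a₁, a₃), s(b₁, b₂), s(b₂, b₃), s(b₁, b₃)] :=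
    fun hc hd hpq x hx y hy hxy => by
      rcases hpq x hx y hy (Or.inr hxy) with ⟨rfl, rfl⟩ | ⟨rfl, rfl⟩
      exacts [.inr (.inr (List.mem_append_left [_, _, _] hc)),
        .inr (.inr (List.mem_append_right [_, _, _] hd))]
  refine ⟨a₁, a₂, a₃, b₁, b₂, b₃, p₁, p₂, p₃, h₁.1, h₂.1, h₃.1, ha₁₂, ha₂₃, ha₁₃, hb₁₂, hb₂₃,
    hb₁₃, disj ha₁₂ hb₁₂ h₁₂, disj ha₁₃ hb₁₃ h₁₃, disj ha₂₃ hb₂₃ h₂₃,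
    adj_iff_of_isInducedPath₃ h₁ h₂ h₃ ?_ (cross (by simp) (by simp) h₁₂)
      (cross (by simp) (by simp) h₁₃) (cross (by simp) (by simp) h₂₃)⟩
  simp [ha₁₂, ha₂₃, ha₁₃, hb₁₂, hb₂₃, hb₁₃]

end InducedSubgraphs

section Holes

variable {G : SimpleGraph V} {v : V} {c : G.Walk v v}

lemma IsInducedCycle.eq_or_eq_of_adj (hc : IsInducedCycle G c) {x y z w : V}
    (hx : x ∈ c.support) (hy : y ∈ c.support) (hz : z ∈ c.support) (hw : w ∈ c.support)
    (hyz : y ≠ z) (hxy : G.Adj x y) (hxz : G.Adj x z) (hxw : G.Adj x w) : w = y ∨ w = z := by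
  by_contra! h
  have hsub : ({y, z, w} : Set V) ⊆ c.toSubgraph.neighborSet x := by
    rintro t (rfl | rfl | rfl) <;>
      exact Walk.adj_toSubgraph_iff_mem_edges.2 ((hc.2 _ hx _ ‹_›).1 ‹_›)
  have h2 := hc.1.ncard_neighborSet_toSubgraph_eq_two hx
  have := Set.ncard_le_ncard hsub (Set.finite_of_ncard_ne_zero (by omega))
  rw [h2, Set.ncard_eq_three.2 ⟨y, z, w, hyz, h.1.symm, h.2.symm, rfl⟩] at this
  omega

lemma IsInducedCycle.exists_arcs (hc : IsInducedCycle G c) {a b : V} (ha : a ∈ c.support)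
    (hb : b ∈ c.support) (hab : a ≠ b) (hnab : ¬ G.Adj a b) :
    ∃ P₁ P₂ : G.Walk a b, IsInducedPath G P₁ ∧ IsInducedPath G P₂ ∧
      (∀ x ∈ P₁.support, ∀ y ∈ P₂.support, (x = y ∨ G.Adj x y) →
        x = a ∨ x = b ∨ y = a ∨ y = b) ∧
      ∀ z, z ∈ c.support ↔ z ∈ P₁.support ∨ z ∈ P₂.support := by
  obtain ⟨P₁, P₂, hP₁, hP₂, hmeet, hsupp, hedges⟩ := hc.1.exists_arcs ha hb hab
  have hadj : ∀ {x y}, x ∈ P₁.support ∨ x ∈ P₂.support → y ∈ P₁.support ∨ y ∈ P₂.support →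
      G.Adj x y → s(x, y) ∈ P₁.edges ∨ s(x, y) ∈ P₂.edges :=
    fun hx hy hxy => (hedges _).1 ((hc.2 _ ((hsupp _).2 hx) _ ((hsupp _).2 hy)).1 hxy)
  -- two vertices common to both arcs are `a` and `b`, which are not adjacent
  have hboth : ∀ {x y}, x ∈ P₁.support → x ∈ P₂.support → y ∈ P₁.support → y ∈ P₂.support →
      ¬ G.Adj x y := by
    intro x y hx hx' hy hy' hxy
    rcases hmeet x hx hx' with rfl | rfl <;> rcases hmeet y hy hy' with rfl | rfl
    exacts [hxy.ne rfl, hnab hxy, hnab hxy.symm, hxy.ne rfl]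
  refine ⟨P₁, P₂, ⟨hP₁, fun x hx y hy => ⟨fun hxy => ?_, P₁.adj_of_mem_edges⟩⟩,
    ⟨hP₂, fun x hx y hy => ⟨fun hxy => ?_, P₂.adj_of_mem_edges⟩⟩, fun x hx y hy hxy => ?_, hsupp⟩
  · refine (hadj (.inl hx) (.inl hy) hxy).resolve_right fun h => hboth hx ?_ hy ?_ hxy
    exacts [P₂.fst_mem_support_of_mem_edges h, P₂.snd_mem_support_of_mem_edges h]
  · refine (hadj (.inr hx) (.inr hy) hxy).resolve_left fun h => hboth ?_ hx ?_ hy hxy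
    exacts [P₁.fst_mem_support_of_mem_edges h, P₁.snd_mem_support_of_mem_edges h]
  · rcases hxy with rfl | hxy
    · have := hmeet x hx hy; tauto
    rcases hadj (.inl hx) (.inr hy) hxy with h | h
    · have := hmeet y (P₁.snd_mem_support_of_mem_edges h) hy; tauto
    · have := hmeet x hx (P₂.fst_mem_support_of_mem_edges h); tauto

lemma IsInducedCycle.exists_path_of_adj (hc : IsInducedCycle G c) {a a' : V}
    (ha : a ∈ c.support) (ha' : a' ∈ c.support) (haa' : G.Adj a a') :
    ∃ Q : G.Walk a a', IsInducedExceptEnds Q ∧ ∀ z, z ∈ c.support ↔ z ∈ Q.support := by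
  obtain ⟨P₁, P₂, hP₁, hP₂, -, hsupp, hedges⟩ := hc.1.exists_arcs ha ha' haa'.ne
  have key : ∀ P Q : G.Walk a a', P.IsPath → Q.IsPath →
      (∀ z, z ∈ c.support ↔ z ∈ P.support ∨ z ∈ Q.support) →
      (∀ e, e ∈ c.edges ↔ e ∈ P.edges ∨ e ∈ Q.edges) → s(a, a') ∈ P.edges →
      ∃ Q : G.Walk a a', IsInducedExceptEnds Q ∧ ∀ z, z ∈ c.support ↔ z ∈ Q.support := by
    intro P Q hP hQ hs he hmem
    have hPe : P = haa'.toWalk := hP.eq_adj_toWalk_of_mem_edges hmem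
    subst hPe
    refine ⟨Q, ⟨hQ, fun x hx y hy hxy => ?_⟩, fun z => ?_⟩
    · simpa using (he _).1 ((hc.2 x ((hs x).2 (.inr hx)) y ((hs y).2 (.inr hy))).1 hxy)
    · rw [hs]
      simp only [Adj.toWalk, Walk.support_cons, Walk.support_nil, List.mem_cons,
        List.not_mem_nil, or_false]
      constructor
      · rintro ((rfl | rfl) | h)
        exacts [Q.start_mem_support, Q.end_mem_support, h]
      · exact Or.inr
  rcases (hedges _).1 ((hc.2 _ ha _ ha').1 haa') with h | h
  · exact key P₁ P₂ hP₁ hP₂ hsupp hedges h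
  · exact key P₂ P₁ hP₂ hP₁ (fun z => (hsupp z).trans or_comm)
      (fun e => (hedges e).trans or_comm) h

end Holes

section Configurations

variable {G : SimpleGraph V} {v : V} {c : G.Walk v v}

lemma bridge_meets_only_at_ends {a b r s : V} {h₁ : G.Adj a r} {I : G.Walk r s} {h₂ : G.Adj s b}
    {P : G.Walk a b} (hIP : ∀ z ∈ I.support, z ∉ P.support)
    (hatt : ∀ u ∈ P.support, ∀ z ∈ I.support, G.Adj u z → u = a ∨ u = b) :
    ∀ x ∈ (Walk.cons h₁ (I.concat h₂)).support, ∀ y ∈ P.support, (x = y ∨ G.Adj x y) →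
      x = a ∨ x = b ∨ y = a ∨ y = b := by
  intro x hx y hy hxy
  rcases (mem_support_cons_concat_iff h₁ I h₂).1 hx with rfl | hx | rfl
  · exact Or.inl rfl
  · rcases hxy with rfl | hxy
    · exact absurd hy (hIP x hx)
    · have := hatt y hy x hx hxy.symm; tauto
  · exact Or.inr (Or.inl rfl)

lemma hasTheta_of_bridge (hc : IsInducedCycle G c) {a b r s : V} (ha : a ∈ c.support)
    (hb : b ∈ c.support) (hab : a ≠ b) (hnab : ¬ G.Adj a b) {h₁ : G.Adj a r} {I : G.Walk r s}
    {h₂ : G.Adj s b} (hq : IsInducedPath G (Walk.cons h₁ (I.concat h₂)))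
    (hIC : ∀ z ∈ I.support, z ∉ c.support)
    (hatt : ∀ u ∈ c.support, ∀ z ∈ I.support, G.Adj u z → u = a ∨ u = b) :
    HasTheta G := by
  obtain ⟨P₁, P₂, hP₁, hP₂, hmeet, hsupp⟩ := hc.exists_arcs ha hb hab hnab
  have hmeet' : ∀ {P : G.Walk a b}, (∀ x ∈ P.support, x ∈ c.support) →
      ∀ x ∈ (Walk.cons h₁ (I.concat h₂)).support, ∀ y ∈ P.support, (x = y ∨ G.Adj x y) →
        x = a ∨ x = b ∨ y = a ∨ y = b := fun hPC =>
    bridge_meets_only_at_ends (fun z hz hzP => hIC z hz (hPC z hzP)) fun u hu => hatt u (hPC u hu)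
  exact hasTheta_of_isInducedPath hq hP₁ hP₂ (by simp) (two_le_length_of_not_adj _ hab hnab)
    (two_le_length_of_not_adj _ hab hnab) (hmeet' fun x hx => (hsupp x).2 (.inl hx))
    (hmeet' fun x hx => (hsupp x).2 (.inr hx)) hmeet

lemma hasWheel_of_bridge (hc : IsInducedCycle G c) {a b r s : V} (ha : a ∈ c.support)
    (hb : b ∈ c.support) (hab : a ≠ b) (hnab : ¬ G.Adj a b) {h₁ : G.Adj a r} {I : G.Walk r s}
    {h₂ : G.Adj s b} (hq : IsInducedPath G (Walk.cons h₁ (I.concat h₂)))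
    (hIC : ∀ z ∈ I.support, z ∉ c.support) {d z : V} (hd : d ∈ c.support) (hda : d ≠ a)
    (hdb : d ≠ b) (hda' : G.Adj d a) (hdb' : G.Adj d b) (hz : z ∈ I.support) (hdz : G.Adj d z)
    (hatt : ∀ u ∈ c.support, ∀ z ∈ I.support, G.Adj u z → u = a ∨ u = b ∨ u = d) :
    HasWheel G := by
  obtain ⟨P₁, P₂, hP₁, hP₂, hmeet, hsupp⟩ := hc.exists_arcs ha hb hab hnab
  suffices key : ∀ B : G.Walk a b, IsInducedPath G B → (∀ x ∈ B.support, x ∈ c.support) →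
      d ∉ B.support → HasWheel G by
    by_cases hd₁ : d ∈ P₁.support
    · refine key P₂ hP₂ (fun x hx => (hsupp x).2 (.inr hx)) fun hd₂ => ?_
      have := hmeet d hd₁ d hd₂ (.inl rfl); tauto
    · exact key P₁ hP₁ (fun x hx => (hsupp x).2 (.inl hx)) hd₁
  intro B hB hBC hdB
  have hK := isInducedCycle_append hq hB
    (bridge_meets_only_at_ends (fun z hz hzB => hIC z hz (hBC z hzB)) fun u hu z hz huz => by
      rcases hatt u (hBC u hu) z hz huz with h | h | rfl
      exacts [.inl h, .inr h, absurd hu hdB])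
    (two_le_length_of_not_adj B hab hnab)
  have hzC : z ∉ c.support := hIC z hz
  refine ⟨a, d, _, hK, ?_, ?_, a, b, z, hab, fun h => hzC (h ▸ ha), fun h => hzC (h ▸ hb),
    by simp, by simp, by simp [hz], hda', hdb', hdz⟩
  · have := two_le_length_of_not_adj B hab hnab
    simp only [Walk.length_append, Walk.length_cons, Walk.length_concat, Walk.length_reverse]
    omega
  · rw [Walk.mem_support_append_iff, mem_support_cons_concat_iff, Walk.support_reverse,
      List.mem_reverse]
    exact fun h => h.elim (fun h => h.elim hda (fun h => h.elim (hIC d · hd) hdb)) hdB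

lemma hasPyramid_of_attachments (hc : IsInducedCycle G c) {a a' b r s : V}
    (ha : a ∈ c.support) (ha' : a' ∈ c.support) (hb : b ∈ c.support) (haa' : G.Adj a a')
    (hab : a ≠ b) (ha'b : a' ≠ b) (hnab : ¬ G.Adj a b) {I : G.Walk r s}
    (hI : IsInducedPath G I) (hIC : ∀ z ∈ I.support, z ∉ c.support) (hIl : 0 < I.length)
    (har : G.Adj a r) (ha'r : G.Adj a' r) (hsb : G.Adj s b)
    (hatt : ∀ u ∈ c.support, ∀ z ∈ I.support, G.Adj u z →
      (z = r ∧ (u = a ∨ u = a')) ∨ (z = s ∧ u = b)) :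
    HasPyramid G := by
  obtain ⟨Q, hQ, hQC⟩ := hc.exists_path_of_adj ha ha' haa'
  obtain ⟨T, S, rfl⟩ := Walk.mem_support_iff_exists_append.1 ((hQC b).1 hb)
  have hTC : ∀ x ∈ T.support, x ∈ c.support := fun x hx => (hQC x).2 (by simp [hx])
  have hSC : ∀ x ∈ S.support, x ∈ c.support := fun x hx => (hQC x).2 (by simp [hx])
  have ha'T : a' ∉ T.support := fun h => ha'b (hQ.eq_of_mem_of_mem h S.end_mem_support)
  have haS : a ∉ S.support := fun h => hab (hQ.eq_of_mem_of_mem T.start_mem_support h)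
  have hp₃ : IsInducedPath G (I.concat hsb) := (isInducedPath_concat_iff I hsb).2
    ⟨hI, fun h => hIC b h hb, fun z hz hbz => by
      rcases hatt b hb z hz hbz with ⟨-, rfl | rfl⟩ | ⟨rfl, -⟩
      exacts [absurd rfl hab, absurd rfl ha'b, rfl]⟩
  have hp₃s : ∀ y ∈ (I.concat hsb).reverse.support, y ∈ I.support ∨ y = b := fun y hy => by
    simp at hy; tauto
  have hatt' : ∀ u ∈ c.support, ∀ z ∈ I.support, (u = z ∨ G.Adj u z) →
      (z = r ∧ (u = a ∨ u = a')) ∨ (z = s ∧ u = b) := fun u hu z hz h =>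
    h.elim (fun h => absurd (h ▸ hu) (hIC z hz)) (hatt u hu z hz)
  refine hasPyramid_of_isInducedPath (p₁ := T.reverse) (p₂ := S)
    (hQ.isInducedPath_left ha'T).reverse (hQ.isInducedPath_right haS) hp₃.reverse haa' ha'r har
    (by simpa using two_le_length_of_not_adj T hab hnab)
    (Walk.not_nil_iff_lt_length.1 (Walk.not_nil_of_ne ha'b.symm)) (by simp; omega)
    (fun x hx y hy hxy => ?_) (fun x hx y hy hxy => ?_) (fun x hx y hy hxy => ?_)
  · rw [Walk.support_reverse, List.mem_reverse] at hx
    exact hQ.touch hx hy hxy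
  · rw [Walk.support_reverse, List.mem_reverse] at hx
    rcases hp₃s y hy with hy | rfl
    · rcases hatt' x (hTC x hx) y hy hxy with ⟨rfl, rfl | rfl⟩ | ⟨-, rfl⟩
      exacts [.inr (.inr ⟨rfl, rfl⟩), absurd hx ha'T, .inl rfl]
    · exact .inr (.inl rfl)
  · rcases hp₃s y hy with hy | rfl
    · rcases hatt' x (hSC x hx) y hy hxy with ⟨rfl, rfl | rfl⟩ | ⟨-, rfl⟩
      exacts [absurd hx haS, .inr (.inr ⟨rfl, rfl⟩), .inl rfl]
    · exact .inr (.inl rfl)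

lemma hasPrism_of_attachments (hc : IsInducedCycle G c) {a a' b b' r s : V}
    (ha : a ∈ c.support) (ha' : a' ∈ c.support) (hb : b ∈ c.support) (hb' : b' ∈ c.support)
    (haa' : G.Adj a a') (hbb' : G.Adj b b') (hab : a ≠ b) (ha'b : a' ≠ b) {I : G.Walk r s}
    (hI : IsInducedPath G I) (hIC : ∀ z ∈ I.support, z ∉ c.support) (har : G.Adj a r)
    (ha'r : G.Adj a' r) (hbs : G.Adj b s) (hb's : G.Adj b' s)
    (hatt : ∀ u ∈ c.support, ∀ z ∈ I.support, G.Adj u z →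
      (z = r ∧ (u = a ∨ u = a')) ∨ (z = s ∧ (u = b ∨ u = b'))) :
    HasPrism G := by
  obtain ⟨Q, hQ, hQC⟩ := hc.exists_path_of_adj ha ha' haa'
  have hne : s(b, b') ≠ s(a, a') := by rw [Ne, Sym2.eq_iff]; tauto
  obtain ⟨x, y, hxy, T, S, hxyb, rfl⟩ := Q.exists_eq_append_cons_of_mem_edges
    ((hQ.2 b ((hQC b).1 hb) b' ((hQC b').1 hb') hbb').resolve_left hne)
  -- the hole is `a, T, x, y, S, a'`, where `{x, y} = {b, b'}`
  have hatt' : ∀ u ∈ c.support, ∀ z ∈ I.support, (u = z ∨ G.Adj u z) →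
      (z = r ∧ (u = a ∨ u = a')) ∨ (z = s ∧ (u = x ∨ u = y)) := fun u hu z hz h => by
    rcases h with rfl | h
    · exact absurd hu (hIC u hz)
    have := hatt u hu z hz h
    rcases Sym2.eq_iff.1 hxyb with ⟨rfl, rfl⟩ | ⟨rfl, rfl⟩ <;> tauto
  have hxys : G.Adj x s ∧ G.Adj y s := by
    rcases Sym2.eq_iff.1 hxyb with ⟨rfl, rfl⟩ | ⟨rfl, rfl⟩
    exacts [⟨hbs, hb's⟩, ⟨hb's, hbs⟩]
  have hQ' : IsInducedExceptEnds ((T.concat hxy).append S) := by rwa [Walk.concat_append]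
  have hxS : x ∉ S.support := ((Walk.cons_isPath_iff _ _).1 hQ.1.of_append_right).2
  have hyT : y ∉ T.support := fun h => (Walk.concat_isPath_iff hxy).1 hQ'.1.of_append_left |>.2 h
  have hTC : ∀ u ∈ T.support, u ∈ c.support := fun u hu => (hQC u).2 (by simp [hu])
  have hSC : ∀ u ∈ S.support, u ∈ c.support := fun u hu => (hQC u).2 (by simp [hu])
  have hTS : ∀ u ∈ T.support, u ∉ S.support := fun u hu hu' =>
    hxS (hQ.eq_of_mem_of_mem hu (by simp [hu']) ▸ hu')
  have ha'T : a' ∉ T.support := fun h => hTS a' h S.end_mem_support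
  have haS : a ∉ S.support := hTS a T.start_mem_support
  refine hasPrism_of_isInducedPath (p₁ := T) (p₂ := S.reverse) (p₃ := I)
    (hQ.isInducedPath_left ha'T) (hQ'.isInducedPath_right haS).reverse hI haa' ha'r har hxy
    hxys.2 hxys.1 (fun u hu w hw huw => ?_) (fun u hu z hz huz => ?_) (fun u hu z hz huz => ?_)
  · rw [Walk.support_reverse, List.mem_reverse] at hw
    have h₁ := hQ.touch hu (by simp [hw]) huw
    have h₂ := hQ'.touch (by simp [hu]) hw huw
    have hwx : w ≠ x := fun h => hxS (h ▸ hw)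
    have huy : u ≠ y := fun h => hyT (h ▸ hu)
    tauto
  · rcases hatt' u (hTC u hu) z hz huz with ⟨rfl, rfl | rfl⟩ | ⟨rfl, rfl | rfl⟩
    exacts [.inl ⟨rfl, rfl⟩, absurd hu ha'T, .inr ⟨rfl, rfl⟩, absurd hu hyT]
  · rw [Walk.support_reverse, List.mem_reverse] at hu
    rcases hatt' u (hSC u hu) z hz huz with ⟨rfl, rfl | rfl⟩ | ⟨rfl, rfl | rfl⟩
    exacts [absurd hu haS, .inl ⟨rfl, rfl⟩, absurd hu hxS, .inr ⟨rfl, rfl⟩]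

lemma not_universallySignable_of_end_attachments (hc : IsInducedCycle G c) {a a' b b' r s : V}
    (ha : a ∈ c.support) (ha' : a' ∈ c.support) (hb : b ∈ c.support) (hb' : b' ∈ c.support)
    (hab : a ≠ b) (hnab : ¬ G.Adj a b) (ha'b : a' ≠ b) (hb'a : b' ≠ a)
    (haa' : a' = a ∨ G.Adj a a') (hbb' : b' = b ∨ G.Adj b b') {h₁ : G.Adj a r}
    {I : G.Walk r s} {h₂ : G.Adj s b} (hq : IsInducedPath G (Walk.cons h₁ (I.concat h₂)))
    (hIC : ∀ z ∈ I.support, z ∉ c.support) (hIl : 0 < I.length) (ha'r : G.Adj a' r)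
    (hb's : G.Adj b' s)
    (hatt : ∀ u ∈ c.support, ∀ z ∈ I.support, G.Adj u z →
      (z = r ∧ (u = a ∨ u = a')) ∨ (z = s ∧ (u = b ∨ u = b'))) :
    ¬ UniversallySignable G := by
  intro hG
  have hI : IsInducedPath G I :=
    ((isInducedPath_concat_iff _ _).1 ((isInducedPath_cons_iff _ _).1 hq).1).1
  rcases haa' with rfl | haa' <;> rcases hbb' with rfl | hbb'
  · exact hG.1 (hasTheta_of_bridge hc ha hb hab hnab hq hIC fun u hu z hz huz => by
      have := hatt u hu z hz huz; tauto)
  · refine hG.2.1 (hasPyramid_of_attachments hc hb hb' ha hbb' hab.symm hb'a (hnab ∘ .symm)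
      hI.reverse (by simpa using hIC) (by simpa using hIl) h₂.symm hb's h₁.symm ?_)
    intro u hu z hz huz
    have := hatt u hu z (by simpa using hz) huz
    tauto
  · exact hG.2.1 (hasPyramid_of_attachments hc ha ha' hb haa' hab ha'b hnab hI hIC hIl h₁
      ha'r h₂ fun u hu z hz huz => by have := hatt u hu z hz huz; tauto)
  · by_cases ha'b' : a' = b'
    · subst ha'b'
      exact hG.2.2.2 (hasWheel_of_bridge hc ha hb hab hnab hq hIC ha' hb'a ha'b haa'.symm
        hbb'.symm I.start_mem_support ha'r fun u hu z hz huz => by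
          have := hatt u hu z hz huz; tauto)
    · exact hG.2.2.1 (hasPrism_of_attachments hc ha ha' hb hb' haa' hbb' hab ha'b hI hIC h₁
        ha'r h₂.symm hb's hatt)

end Configurations

section Bridges

variable {G : SimpleGraph V}

/-- An induced path `a, r, …, s, b` joining two vertices of `C` whose inner part `r, …, s`
avoids `C`. -/
structure Bridge (G : SimpleGraph V) (C : Set V) where
  (a r s b : V)
  a_mem : a ∈ C
  b_mem : b ∈ C
  adj_first : G.Adj a r
  inner : G.Walk r s
  adj_last : G.Adj s b
  isInducedPath : IsInducedPath G (Walk.cons adj_first (inner.concat adj_last))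
  inner_not_mem : ∀ z ∈ inner.support, z ∉ C

namespace Bridge

variable {C : Set V} (K : Bridge G C)

lemma isInducedPath_inner : IsInducedPath G K.inner :=
  ((isInducedPath_concat_iff _ _).1 ((isInducedPath_cons_iff _ _).1 K.isInducedPath).1).1

lemma eq_first_of_adj {z : V} (hz : z ∈ K.inner.support) (h : G.Adj K.a z) : z = K.r :=
  ((isInducedPath_cons_iff _ _).1 K.isInducedPath).2.2 z (by simp [Walk.support_concat, hz]) h

lemma eq_last_of_adj {z : V} (hz : z ∈ K.inner.support) (h : G.Adj K.b z) : z = K.s :=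
  ((isInducedPath_concat_iff _ _).1 ((isInducedPath_cons_iff _ _).1 K.isInducedPath).1).2.2
    z hz h

lemma ne : K.a ≠ K.b := fun h =>
  ((isInducedPath_cons_iff _ _).1 K.isInducedPath).2.1 (by simp [Walk.support_concat, h])

lemma not_adj : ¬ G.Adj K.a K.b := fun h => by
  have hbr := ((isInducedPath_cons_iff _ _).1 K.isInducedPath).2.2 K.b
    (by simp [Walk.support_concat]) h
  exact ((isInducedPath_concat_iff _ _).1 ((isInducedPath_cons_iff _ _).1 K.isInducedPath).1).2.1
    (by rw [hbr]; exact K.inner.start_mem_support)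

lemma exists_of_isInducedPath {u w : V} (p : G.Walk u w) (hp : IsInducedPath G p)
    (hu : u ∈ C) (hw : w ∈ C) (hout : ∃ x ∈ p.support, x ∉ C) : Nonempty (Bridge G C) := by
  obtain ⟨a, r, har, p₁, p₂, rfl, hp₁, hr⟩ :=
    p.exists_eq_append_cons_boundary (· ∉ C) (not_not.2 hu) hout
  obtain ⟨s, b, hsb, I, p₃, rfl, hI, hb⟩ :=
    p₂.exists_eq_append_cons_boundary (· ∈ C) hr ⟨w, p₂.end_mem_support, hw⟩
  have hq : IsInducedPath G ((Walk.cons har (I.concat hsb)).append p₃) := by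
    have := hp.of_append_right
    rwa [Walk.cons_append, Walk.concat_eq_append, ← Walk.append_assoc, Walk.cons_append,
      Walk.nil_append]
  exact ⟨⟨a, r, s, b, not_not.1 (hp₁ a p₁.end_mem_support), hb, har, I, hsb,
    hq.of_append_left, hI⟩⟩

lemma exists_of_segment {d₁ d₂ x y : V} (hd₁ : d₁ ∈ C) (hd₂ : d₂ ∈ C) (hne : d₁ ≠ d₂)
    (hnadj : ¬ G.Adj d₁ d₂) {m : G.Walk x y} (hm : IsInducedPath G m)
    (hmC : ∀ z ∈ m.support, z ∉ C) (h₁ : G.Adj d₁ x) (h₂ : G.Adj y d₂)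
    (hn₁ : ∀ z ∈ m.support, G.Adj d₁ z → z = x) (hn₂ : ∀ z ∈ m.support, G.Adj d₂ z → z = y) :
    ∃ K : Bridge G C, K.inner.length = m.length :=
  ⟨⟨d₁, x, y, d₂, hd₁, hd₂, h₁, m, h₂, isInducedPath_cons_concat h₁ h₂ hm
    (fun h => hmC _ h hd₁) (fun h => hmC _ h hd₂) hne hnadj hn₁ hn₂, hmC⟩, rfl⟩

end Bridge

end Bridges

section UniversallySignable

variable {G : SimpleGraph V} {v : V} {c : G.Walk v v}

lemma UniversallySignable.eq_or_eq_of_adj (hG : UniversallySignable G)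
    (hc : IsInducedCycle G c) (hlen : 3 < c.length) {x y z w : V} (hx : x ∉ c.support)
    (hy : y ∈ c.support) (hz : z ∈ c.support) (hw : w ∈ c.support) (hyz : y ≠ z)
    (hxy : G.Adj x y) (hxz : G.Adj x z) (hxw : G.Adj x w) : w = y ∨ w = z := by
  by_contra! h
  exact hG.2.2.2 ⟨v, x, c, hc, hlen, hx, y, z, w, hyz, h.1.symm, h.2.symm, hy, hz, hw, hxy, hxz,
    hxw⟩

lemma UniversallySignable.adj_of_adj (hG : UniversallySignable G) (hc : IsInducedCycle G c)
    (hlen : 3 < c.length) {x y z : V} (hx : x ∉ c.support) (hy : y ∈ c.support)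
    (hz : z ∈ c.support) (hyz : y ≠ z) (hxy : G.Adj x y) (hxz : G.Adj x z) : G.Adj y z := by
  by_contra hnyz
  have hxy' : x ≠ y := fun h => hx (h ▸ hy)
  have hxz' : x ≠ z := fun h => hx (h ▸ hz)
  refine hG.1 (hasTheta_of_bridge hc hy hz hyz hnyz (I := .nil)
    (isInducedPath_cons_concat hxy.symm hxz (isInducedPath_iff.2 ⟨.nil, by simp⟩)
      (by simpa using hxy'.symm) (by simpa using hxz'.symm) hyz hnyz (by simp) (by simp))
    (by simpa using hx) ?_)
  simp only [Walk.support_nil, List.mem_singleton, forall_eq]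
  exact fun u hu hux => hG.eq_or_eq_of_adj hc hlen hx hy hz hu hyz hxy hxz hux.symm

lemma UniversallySignable.exists_adj_pair (hG : UniversallySignable G)
    (hc : IsInducedCycle G c) (hlen : 3 < c.length) {x y : V} (hx : x ∉ c.support)
    (hy : y ∈ c.support) (hxy : G.Adj y x) :
    ∃ y' ∈ c.support, G.Adj y' x ∧ (y' = y ∨ G.Adj y y') ∧
      ∀ u ∈ c.support, G.Adj u x → u = y ∨ u = y' := by
  by_cases h : ∃ u ∈ c.support, u ≠ y ∧ G.Adj u x
  · obtain ⟨u, hu, huy, hux⟩ := h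
    exact ⟨u, hu, hux, .inr (hG.adj_of_adj hc hlen hx hy hu huy.symm hxy.symm hux.symm),
      fun w hw hwx => hG.eq_or_eq_of_adj hc hlen hx hy hu hw huy.symm hxy.symm hux.symm hwx.symm⟩
  · push Not at h
    exact ⟨y, hy, hxy, .inl rfl, fun u hu hux => .inl (by_contra fun hne => h u hu hne hux)⟩

end UniversallySignable

namespace Bridge

variable {G : SimpleGraph V} {v : V} {c : G.Walk v v}

lemma exists_sub_bridge (hG : UniversallySignable G) (hc : IsInducedCycle G c)
    (hlen : 3 < c.length) (K : Bridge G {x | x ∈ c.support}) {d₁ d₂ : V} (hd₁ : d₁ ∈ c.support)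
    (hd₂ : d₂ ∈ c.support) (hne : d₁ ≠ d₂) (hnadj : ¬ G.Adj d₁ d₂)
    (h₁ : ∃ z ∈ K.inner.support, G.Adj d₁ z) (h₂ : ∃ z ∈ K.inner.support, G.Adj d₂ z) :
    ∃ (x y : V) (p₁ : G.Walk K.r x) (m : G.Walk x y) (p₂ : G.Walk y K.s),
      K.inner = p₁.append (m.append p₂) ∧
      (∃ K' : Bridge G {x | x ∈ c.support}, K'.inner.length = m.length) ∧
      ∀ z ∈ m.support, G.Adj d₁ z → z = x ∨ z = y := by
  have hboth : ∀ z ∈ K.inner.support, ¬ (G.Adj d₁ z ∧ G.Adj d₂ z) := fun z hz h =>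
    hnadj (hG.adj_of_adj hc hlen (K.inner_not_mem z hz) hd₁ hd₂ hne h.1.symm h.2.symm)
  obtain ⟨x, y, p₁, m, p₂, heq, hxy, hm⟩ :=
    K.inner.exists_segment (G.Adj d₁) (G.Adj d₂) hboth h₁ h₂
  have hmI : ∀ z ∈ m.support, z ∈ K.inner.support := fun z hz => by
    rw [heq]; simp [Walk.mem_support_append_iff, hz]
  have hmind : IsInducedPath G m := by
    have := K.isInducedPath_inner
    rw [heq] at this
    exact this.of_append_right.of_append_left
  have hmC : ∀ z ∈ m.support, z ∉ {x | x ∈ c.support} := fun z hz => K.inner_not_mem z (hmI z hz)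
  refine ⟨x, y, p₁, m, p₂, heq, ?_, fun z hz h => hm z hz (.inl h)⟩
  rcases hxy with ⟨hx, hy⟩ | ⟨hx, hy⟩
  · refine exists_of_segment (C := {x | x ∈ c.support}) hd₁ hd₂ hne hnadj hmind hmC hx hy.symm
      (fun w hw h => ?_) (fun w hw h => ?_) <;> rcases hm w hw (by tauto) with rfl | rfl
    exacts [rfl, absurd ⟨h, hy⟩ (hboth _ (hmI _ hw)), absurd ⟨hx, h⟩ (hboth _ (hmI _ hw)), rfl]
  · refine exists_of_segment (C := {x | x ∈ c.support}) hd₂ hd₁ hne.symm (hnadj ∘ .symm) hmind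
      hmC hx hy.symm (fun w hw h => ?_) (fun w hw h => ?_) <;>
      rcases hm w hw (by tauto) with rfl | rfl
    exacts [rfl, absurd ⟨hy, h⟩ (hboth _ (hmI _ hw)), absurd ⟨h, hx⟩ (hboth _ (hmI _ hw)), rfl]

lemma not_adj_interior (hG : UniversallySignable G) (hc : IsInducedCycle G c)
    (hlen : 3 < c.length) {K : Bridge G {x | x ∈ c.support}}
    (hK : ∀ K' : Bridge G {x | x ∈ c.support}, K.inner.length ≤ K'.inner.length)
    {d₁ d₂ : V} (hd₁ : d₁ ∈ c.support) (hd₂ : d₂ ∈ c.support) (hne : d₁ ≠ d₂)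
    (hnadj : ¬ G.Adj d₁ d₂) (h₁ : ∃ z ∈ K.inner.support, G.Adj d₁ z)
    (h₂ : ∃ z ∈ K.inner.support, G.Adj d₂ z) {z : V} (hz : z ∈ K.inner.support) (hzr : z ≠ K.r)
    (hzs : z ≠ K.s) : ¬ G.Adj d₁ z := by
  obtain ⟨x, y, p₁, m, p₂, heq, ⟨K', hK'⟩, hm⟩ :=
    K.exists_sub_bridge hG hc hlen hd₁ hd₂ hne hnadj h₁ h₂
  -- by minimality, the segment `m` is all of `inner`
  have hlen' := congrArg Walk.length heq
  simp only [Walk.length_append] at hlen'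
  have hp₁ : p₁.length = 0 := by have := hK K'; omega
  have hp₂ : p₂.length = 0 := by have := hK K'; omega
  have hzm : z ∈ m.support := by
    rw [heq, Walk.mem_support_append_iff, Walk.mem_support_append_iff] at hz
    rcases hz with hz | hz | hz
    · rw [mem_support_of_length_eq_zero hp₁ hz, Walk.eq_of_length_eq_zero hp₁]
      exact m.start_mem_support
    · exact hz
    · rw [mem_support_of_length_eq_zero hp₂ hz]
      exact m.end_mem_support
  intro hdz
  rcases hm z hzm hdz with rfl | rfl
  · exact hzr (Walk.eq_of_length_eq_zero hp₁).symm
  · exact hzs (Walk.eq_of_length_eq_zero hp₂)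

lemma false_of_adj_interior (hG : UniversallySignable G) (hc : IsInducedCycle G c)
    (hlen : 3 < c.length) {K : Bridge G {x | x ∈ c.support}}
    (hK : ∀ K' : Bridge G {x | x ∈ c.support}, K.inner.length ≤ K'.inner.length)
    {d z : V} (hd : d ∈ c.support) (hz : z ∈ K.inner.support) (hzr : z ≠ K.r) (hzs : z ≠ K.s)
    (hdz : G.Adj d z) : False := by
  have hda : d ≠ K.a := fun h => hzr (K.eq_first_of_adj hz (h ▸ hdz))
  have hdb : d ≠ K.b := fun h => hzs (K.eq_last_of_adj hz (h ▸ hdz))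
  have hda' : G.Adj d K.a := by
    by_contra h
    exact not_adj_interior hG hc hlen hK hd K.a_mem hda h ⟨z, hz, hdz⟩
      ⟨K.r, K.inner.start_mem_support, K.adj_first⟩ hz hzr hzs hdz
  have hdb' : G.Adj d K.b := by
    by_contra h
    exact not_adj_interior hG hc hlen hK hd K.b_mem hdb h ⟨z, hz, hdz⟩
      ⟨K.s, K.inner.end_mem_support, K.adj_last.symm⟩ hz hzr hzs hdz
  refine hG.2.2.2 (hasWheel_of_bridge hc K.a_mem K.b_mem K.ne K.not_adj K.isInducedPath
    K.inner_not_mem hd hda hdb hda' hdb' hz hdz fun u hu w hw huw => ?_)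
  by_contra! h
  -- the neighbours of `d` on the hole are `a` and `b`
  have hdu : ¬ G.Adj d u := fun hdu => by
    rcases hc.eq_or_eq_of_adj hd K.a_mem K.b_mem hu K.ne hda' hdb' hdu with rfl | rfl
    exacts [h.1 rfl, h.2.1 rfl]
  exact not_adj_interior hG hc hlen hK hd hu (Ne.symm h.2.2) hdu ⟨z, hz, hdz⟩ ⟨w, hw, huw⟩ hz hzr
    hzs hdz

lemma false_of_adj_ends (hG : UniversallySignable G) (hc : IsInducedCycle G c)
    (hlen : 3 < c.length) (K : Bridge G {x | x ∈ c.support})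
    (hends : ∀ u ∈ c.support, ∀ z ∈ K.inner.support, G.Adj u z → z = K.r ∨ z = K.s) :
    False := by
  have hrC := K.inner_not_mem K.r K.inner.start_mem_support
  have hsC := K.inner_not_mem K.s K.inner.end_mem_support
  have hrs : K.r ≠ K.s := fun h =>
    K.not_adj (hG.adj_of_adj hc hlen hrC K.a_mem K.b_mem K.ne K.adj_first.symm (h ▸ K.adj_last))
  obtain ⟨a', ha', ha'r, haa', hra⟩ := hG.exists_adj_pair hc hlen hrC K.a_mem K.adj_first
  obtain ⟨b', hb', hb's, hbb', hsb'⟩ := hG.exists_adj_pair hc hlen hsC K.b_mem K.adj_last.symm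
  refine not_universallySignable_of_end_attachments hc K.a_mem ha' K.b_mem hb' K.ne K.not_adj
    (fun h => hrs (K.eq_last_of_adj K.inner.start_mem_support (h ▸ ha'r)))
    (fun h => hrs (K.eq_first_of_adj K.inner.end_mem_support (h ▸ hb's)).symm) haa' hbb'
    K.isInducedPath K.inner_not_mem (Walk.not_nil_iff_lt_length.1 (Walk.not_nil_of_ne hrs)) ha'r
    hb's (fun u hu z hz huz => ?_) hG
  rcases hends u hu z hz huz with rfl | rfl
  exacts [.inl ⟨rfl, hra u hu huz⟩, .inr ⟨rfl, hsb' u hu huz⟩]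

end Bridge

lemma isEmpty_bridge {G : SimpleGraph V} {v : V} {c : G.Walk v v} (hG : UniversallySignable G)
    (hc : IsInducedCycle G c) (hlen : 3 < c.length) : IsEmpty (Bridge G {x | x ∈ c.support}) := by
  classical
  refine ⟨fun K₀ => ?_⟩
  have hex : ∃ n, ∃ K : Bridge G {x | x ∈ c.support}, K.inner.length = n := ⟨_, K₀, rfl⟩
  obtain ⟨K, hK⟩ := Nat.find_spec hex
  have hmin : ∀ K' : Bridge G {x | x ∈ c.support}, K.inner.length ≤ K'.inner.length :=
    fun K' => hK ▸ Nat.find_min' hex ⟨K', rfl⟩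
  by_cases h : ∃ d ∈ c.support, ∃ z ∈ K.inner.support, z ≠ K.r ∧ z ≠ K.s ∧ G.Adj d z
  · obtain ⟨d, hd, z, hz, hzr, hzs, hdz⟩ := h
    exact Bridge.false_of_adj_interior hG hc hlen hmin hd hz hzr hzs hdz
  · push Not at h
    exact K.false_of_adj_ends hG hc hlen fun u hu z hz huz => by
      by_contra! h'
      exact h u hu z hz h'.1 h'.2 huz

theorem stmt4_general {V : Type} (G : SimpleGraph V) (hG : UniversallySignable G)
    (v : V) (c : G.Walk v v) (hc : IsInducedCycle G c) (hlen : 3 < c.length)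
    (u w : V) (hu : u ∈ c.support) (hw : w ∈ c.support)
    (p : G.Walk u w) (hp : IsInducedPath G p) :
    ∀ x ∈ p.support, x ∈ c.support := by
  intro x hx
  by_contra hxc
  obtain ⟨K⟩ := Bridge.exists_of_isInducedPath (C := {x | x ∈ c.support}) p hp hu hw ⟨x, hx, hxc⟩
  exact (isEmpty_bridge hG hc hlen).false K

theorem stmt4 {V : Type} [Fintype V] (G : SimpleGraph V) (hG : UniversallySignable G)
    (v : V) (c : G.Walk v v) (hc : IsInducedCycle G c) (hlen : 3 < c.length)
    (u w : V) (hu : u ∈ c.support) (hw : w ∈ c.support) (hne : u ≠ w)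
    (hadj : ¬ G.Adj u w) (p : G.Walk u w) (hp : IsInducedPath G p) :
    ∀ x ∈ p.support, x ∈ c.support :=
  stmt4_general G hG v c hc hlen u w hu hw p hp

end Paper
end
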